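/- arXiv:1905.03382 — 8 statements merged into one kernel-verified Lean document; each statement's English description precedes it below -/
import Mathlib

section
/- Cousin's Lemma: If I = [a,b] is a closed bounded interval with a ≤ b and δ : ℝ → ℝ is a function that is positive at every point of I, then there exists a δ-fine tagged partition of I, i.e. a finite sequence a = t₀ < t₁ < ... < tₚ = b together with tags xⱼ ∈ [t_{j-1}, tⱼ] such that tⱼ - t_{j-1} < δ(xⱼ) for every j. -/
/-- `(n, t, x)` is a tagged partition of `[a,b]`: `t 0 = a`, `t n = b`,
the `t j` are strictly increasing, and the tag `x j` lies in `[t j, t (j+1)]`. -/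
def IsTaggedPartition (a b : ℝ) (n : ℕ) (t x : ℕ → ℝ) : Prop :=
  t 0 = a ∧ t n = b ∧ (∀ j < n, t j < t (j + 1)) ∧
    ∀ j < n, x j ∈ Set.Icc (t j) (t (j + 1))

/-- The tagged partition is `δ`-fine: each interval has length `< δ` of its tag. -/
def IsFine (δ : ℝ → ℝ) (n : ℕ) (t x : ℕ → ℝ) : Prop :=
  ∀ j < n, t (j + 1) - t j < δ (x j)

lemma cousin_extend (a c d ξ : ℝ) (δ : ℝ → ℝ) (n : ℕ) (t x : ℕ → ℝ)
    (hp : IsTaggedPartition a c n t x) (hf : IsFine δ n t x)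
    (hcd : c < d) (hξ : ξ ∈ Set.Icc c d) (hlen : d - c < δ ξ) :
    ∃ (n : ℕ) (t x : ℕ → ℝ), IsTaggedPartition a d n t x ∧ IsFine δ n t x := by
  obtain ⟨h0, hn, hmono, htag⟩ := hp
  refine ⟨n + 1, fun j => if j ≤ n then t j else d,
    fun j => if j < n then x j else ξ, ⟨?_, ?_, ?_, ?_⟩, ?_⟩
  · simp [h0]
  · simp
  · intro j hj
    rcases lt_or_eq_of_le (Nat.lt_succ_iff.mp hj) with h | h
    · simp only [Nat.le_of_lt h, Nat.succ_le_of_lt h, if_pos]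
      exact hmono j h
    · subst h
      simp only [le_refl, if_pos, Nat.not_le.mpr (Nat.lt_succ_self j), if_neg, hn]
      simpa [hn] using hcd
  · intro j hj
    rcases lt_or_eq_of_le (Nat.lt_succ_iff.mp hj) with h | h
    · simp only [h, Nat.le_of_lt h, Nat.succ_le_of_lt h, if_pos]
      exact htag j h
    · subst h
      simp only [lt_irrefl, if_neg, le_refl, if_pos, Nat.not_le.mpr (Nat.lt_succ_self j), hn]
      simpa [hn] using hξ
  · intro j hj
    rcases lt_or_eq_of_le (Nat.lt_succ_iff.mp hj) with h | h
    · simp only [h, Nat.le_of_lt h, Nat.succ_le_of_lt h, if_pos]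
      exact hf j h
    · subst h
      simp only [lt_irrefl, if_neg, le_refl, if_pos, Nat.not_le.mpr (Nat.lt_succ_self j), hn]
      simpa [hn] using hlen

/-- Cousin's lemma: for every positive gauge `δ` on `[a,b]` there is a
`δ`-fine tagged partition of `[a,b]`. -/
theorem cousin_lemma (a b : ℝ) (hab : a ≤ b) (δ : ℝ → ℝ)
    (hδ : ∀ y ∈ Set.Icc a b, 0 < δ y) :
    ∃ (n : ℕ) (t x : ℕ → ℝ), IsTaggedPartition a b n t x ∧ IsFine δ n t x := by
  rcases eq_or_lt_of_le hab with rfl | hab'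
  · exact ⟨0, fun _ => a, fun _ => a,
      ⟨rfl, rfl, fun j hj => absurd hj (Nat.not_lt_zero j), fun j hj => absurd hj (Nat.not_lt_zero j)⟩,
      fun j hj => absurd hj (Nat.not_lt_zero j)⟩
  set S : Set ℝ := {c | c ∈ Set.Icc a b ∧
    ∃ (n : ℕ) (t x : ℕ → ℝ), IsTaggedPartition a c n t x ∧ IsFine δ n t x} with hS
  have haS : a ∈ S := ⟨⟨le_refl a, hab⟩, 0, fun _ => a, fun _ => a,
    ⟨rfl, rfl, fun j hj => absurd hj (Nat.not_lt_zero j), fun j hj => absurd hj (Nat.not_lt_zero j)⟩,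
    fun j hj => absurd hj (Nat.not_lt_zero j)⟩
  have hne : S.Nonempty := ⟨a, haS⟩
  have hbdd : BddAbove S := ⟨b, fun c hc => hc.1.2⟩
  set m := sSup S with hm
  have ham : a ≤ m := le_csSup hbdd haS
  have hmb : m ≤ b := csSup_le hne fun c hc => hc.1.2
  have hmI : m ∈ Set.Icc a b := ⟨ham, hmb⟩
  have hδm : 0 < δ m := hδ m hmI
  -- m ∈ S
  have hmS : m ∈ S := by
    obtain ⟨c, hcS, hc⟩ := exists_lt_of_lt_csSup hne (by linarith : m - δ m < m)
    obtain ⟨hcI, n, t, x, hp, hf⟩ := id hcS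
    rcases eq_or_lt_of_le (le_csSup hbdd hcS) with h | h
    · rwa [h] at hcS
    · exact ⟨hmI, cousin_extend a c m m δ n t x hp hf h ⟨le_of_lt h, le_refl m⟩ (by linarith)⟩
  -- m = b
  rcases eq_or_lt_of_le hmb with h | h
  · obtain ⟨_, n, t, x, hp, hf⟩ := hmS
    rw [h] at hp
    exact ⟨n, t, x, hp, hf⟩
  · exfalso
    set d := min b (m + δ m / 2) with hd
    have hmd : m < d := lt_min h (by linarith)
    have hdb : d ≤ b := min_le_left _ _
    have hdlen : d - m < δ m := by
      have : d ≤ m + δ m / 2 := min_le_right _ _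
      linarith
    obtain ⟨_, n, t, x, hp, hf⟩ := hmS
    have hdS : d ∈ S := ⟨⟨le_trans ham (le_of_lt hmd), hdb⟩,
      cousin_extend a m d m δ n t x hp hf hmd ⟨le_refl m, le_of_lt hmd⟩ hdlen⟩
    exact absurd (le_csSup hbdd hdS) (not_le.mpr hmd)
end

section
/- Let f : [a,b] → ℝ be continuous on [a,b] and differentiable at every point of [a,b] except possibly at countably many points. Then for every ε > 0 there exists a positive gauge δ on [a,b] such that for every δ-fine tagged partition (([t_{j-1},tⱼ], xⱼ))_{j=1}^p of [a,b], one has |Σⱼ g(xⱼ)(tⱼ - t_{j-1}) - (f(b) - f(a))| < ε, where g(x) = f'(x) at differentiability points and g(x) = 0 elsewhere. -/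
/-- Riemann sum of `g` over the tagged partition `(n, t, x)`. -/
def RiemannSum (g : ℝ → ℝ) (n : ℕ) (t x : ℕ → ℝ) : ℝ :=
  ∑ j ∈ Finset.range n, g (x j) * (t (j + 1) - t j)

/-!
At a point `x` where `f` is differentiable, the straddle lemma makes the error
`|f' x (v - u) - (f v - f u)|` of a small interval `[u, v] ∋ x` at most `c (v - u)`, and these
errors add up to at most `c (b - a)`. At the countably many exceptional points the Riemann sum
contributes nothing, so only `|f v - f u|` has to be controlled: continuity bounds it by a weight
`w x`, where the weights are chosen with sum at most `ε / 4` over the exceptional set. A point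
tags at most two intervals of a partition, so these errors add up to at most `ε / 2`.
-/

open Finset

theorem HasDerivWithinAt.exists_abs_sub_le_of_straddle {f : ℝ → ℝ} {f' : ℝ} {s : Set ℝ} {x : ℝ}
    (hf : HasDerivWithinAt f f' s x) {c : ℝ} (hc : 0 < c) :
    ∃ d > 0, ∀ u ∈ s, ∀ v ∈ s, u ≤ x → x ≤ v → v - u < d →
      |f' * (v - u) - (f v - f u)| ≤ c * (v - u) := by
  obtain ⟨d, hd, hball⟩ := Metric.mem_nhdsWithin_iff.mp
    ((hasDerivWithinAt_iff_isLittleO.mp hf).def hc)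
  have hlin : ∀ y ∈ s, |y - x| < d → |f y - f x - f' * (y - x)| ≤ c * |y - x| := by
    intro y hy hyd
    have := hball ⟨by rwa [Metric.mem_ball, Real.dist_eq], hy⟩
    simpa only [Set.mem_ofPred_eq, Real.norm_eq_abs, smul_eq_mul, mul_comm f'] using this
  refine ⟨d, hd, fun u hu v hv hux hxv huv => ?_⟩
  have hu := hlin u hu (by rw [abs_of_nonpos (by linarith)]; linarith)
  have hv := hlin v hv (by rw [abs_of_nonneg (by linarith)]; linarith)
  rw [abs_of_nonpos (by linarith : u - x ≤ 0)] at hu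
  rw [abs_of_nonneg (by linarith : 0 ≤ v - x)] at hv
  calc |f' * (v - u) - (f v - f u)|
      = |(f u - f x - f' * (u - x)) - (f v - f x - f' * (v - x))| := by ring_nf
    _ ≤ |f u - f x - f' * (u - x)| + |f v - f x - f' * (v - x)| := abs_sub _ _
    _ ≤ c * -(u - x) + c * (v - x) := add_le_add hu hv
    _ = c * (v - u) := by ring

theorem ContinuousWithinAt.exists_abs_sub_le_of_straddle {f : ℝ → ℝ} {s : Set ℝ} {x : ℝ}
    (hf : ContinuousWithinAt f s x) {w : ℝ} (hw : 0 < w) :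
    ∃ d > 0, ∀ u ∈ s, ∀ v ∈ s, u ≤ x → x ≤ v → v - u < d → |f v - f u| ≤ w := by
  obtain ⟨d, hd, hball⟩ := Metric.continuousWithinAt_iff.mp hf (w / 2) (half_pos hw)
  refine ⟨d, hd, fun u hu v hv hux hxv huv => ?_⟩
  have hu := hball hu (by rw [Real.dist_eq, abs_of_nonpos (by linarith)]; linarith)
  have hv := hball hv (by rw [Real.dist_eq, abs_of_nonneg (by linarith)]; linarith)
  rw [Real.dist_eq] at hu hv
  calc |f v - f u| = |(f v - f x) - (f u - f x)| := by ring_nf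
    _ ≤ |f v - f x| + |f u - f x| := abs_sub _ _
    _ ≤ w := by linarith

namespace IsTaggedPartition

variable {a b : ℝ} {n : ℕ} {t x : ℕ → ℝ}

theorem strictMonoOn (hP : IsTaggedPartition a b n t x) : StrictMonoOn t (Set.Iic n) :=
  strictMonoOn_Iic_of_lt_succ fun m hm => by simpa using hP.2.2.1 m hm

theorem point_mem_Icc (hP : IsTaggedPartition a b n t x) {j : ℕ} (hj : j ≤ n) :
    t j ∈ Set.Icc a b := by
  have hmono := hP.strictMonoOn.monotoneOn
  refine ⟨?_, ?_⟩
  · simpa only [hP.1] using hmono (Set.mem_Iic.2 (Nat.zero_le n)) hj (Nat.zero_le j)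
  · simpa only [hP.2.1] using hmono hj (Set.mem_Iic.2 le_rfl) hj

theorem tag_mem_Icc (hP : IsTaggedPartition a b n t x) {j : ℕ} (hj : j < n) :
    x j ∈ Set.Icc a b :=
  Set.Icc_subset_Icc (hP.point_mem_Icc hj.le).1 (hP.point_mem_Icc hj).2 (hP.2.2.2 j hj)

theorem sum_sub (hP : IsTaggedPartition a b n t x) (F : ℝ → ℝ) :
    ∑ j ∈ range n, (F (t (j + 1)) - F (t j)) = F b - F a := by
  rw [sum_range_sub (fun j => F (t j)), hP.1, hP.2.1]

theorem abs_riemannSum_sub_le (hP : IsTaggedPartition a b n t x) (g F : ℝ → ℝ) (e : ℕ → ℝ)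
    (he : ∀ j < n, |g (x j) * (t (j + 1) - t j) - (F (t (j + 1)) - F (t j))| ≤ e j) :
    |RiemannSum g n t x - (F b - F a)| ≤ ∑ j ∈ range n, e j := by
  rw [← hP.sum_sub F, RiemannSum, ← sum_sub_distrib]
  exact (abs_sum_le_sum_abs _ _).trans (sum_le_sum fun j hj => he j (mem_range.1 hj))

theorem eq_succ_of_tag_eq (hP : IsTaggedPartition a b n t x) {j k : ℕ} (hjk : j < k)
    (hk : k < n) (htag : x j = x k) : k = j + 1 := by
  by_contra hne
  have hlt : t (j + 1) < t k :=
    hP.strictMonoOn (Set.mem_Iic.2 (by omega)) (Set.mem_Iic.2 hk.le) (by omega)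
  linarith [(hP.2.2.2 j (by omega)).2, (hP.2.2.2 k hk).1]

theorem card_filter_tag_eq_le_two (hP : IsTaggedPartition a b n t x) {s : Finset ℕ}
    (hs : s ⊆ range n) (v : ℝ) : #{j ∈ s | x j = v} ≤ 2 := by
  set T := {j ∈ s | x j = v}
  rcases T.eq_empty_or_nonempty with hT | hT
  · simp [hT]
  have hT_le : ∀ k ∈ T, k ≤ T.min' hT + 1 := by
    intro k hk
    rcases (T.min'_le k hk).eq_or_lt with h | h
    · omega
    have hm := mem_filter.1 (T.min'_mem hT)
    have hk' := mem_filter.1 hk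
    exact (hP.eq_succ_of_tag_eq h (mem_range.1 (hs hk'.1)) (hm.2.trans hk'.2.symm)).le
  calc #T ≤ #(Icc (T.min' hT) (T.min' hT + 1)) :=
        card_le_card fun k hk => mem_Icc.2 ⟨T.min'_le k hk, hT_le k hk⟩
    _ = 2 := by simp only [Nat.card_Icc]; omega

theorem sum_comp_tag_le (hP : IsTaggedPartition a b n t x) {w : ℝ → ℝ} (hw : ∀ v, 0 ≤ w v)
    {s : Finset ℕ} (hs : s ⊆ range n) :
    ∑ j ∈ s, w (x j) ≤ 2 * ∑ v ∈ s.image x, w v := by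
  rw [sum_comp, mul_sum]
  refine sum_le_sum fun v _ => ?_
  rw [nsmul_eq_mul]
  exact mul_le_mul_of_nonneg_right (by exact_mod_cast hP.card_filter_tag_eq_le_two hs v) (hw v)

theorem sum_ite_tag_mem_le (hP : IsTaggedPartition a b n t x) {D : Set ℝ} {w : ℝ → ℝ}
    (hw : ∀ v, 0 ≤ w v) {η : ℝ} (hwD : ∀ V : Finset ℝ, ↑V ⊆ D → ∑ v ∈ V, w v ≤ η) {c : ℝ}
    (hc : 0 ≤ c) [DecidablePred (· ∈ D)] :
    ∑ j ∈ range n, (if x j ∈ D then w (x j) else c * (t (j + 1) - t j))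
      ≤ 2 * η + c * (b - a) := by
  rw [sum_ite]
  have htag : ∑ j ∈ range n with x j ∈ D, w (x j) ≤ 2 * η := by
    refine (hP.sum_comp_tag_le hw (filter_subset _ _)).trans ?_
    refine mul_le_mul_of_nonneg_left (hwD _ ?_) zero_le_two
    intro v hv
    obtain ⟨j, hj, rfl⟩ := mem_image.1 (mem_coe.1 hv)
    exact (mem_filter.1 hj).2
  have hlen : ∑ j ∈ range n with x j ∉ D, c * (t (j + 1) - t j) ≤ c * (b - a) := by
    calc _ ≤ ∑ j ∈ range n, c * (t (j + 1) - t j) :=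
          sum_le_sum_of_subset_of_nonneg (filter_subset _ _) fun j hj _ =>
            mul_nonneg hc (sub_nonneg.2 (hP.2.2.1 j (mem_range.1 hj)).le)
      _ = c * (b - a) := by rw [← mul_sum]; exact congrArg (c * ·) (hP.sum_sub id)
  exact add_le_add htag hlen

end IsTaggedPartition

/-- Fundamental theorem: if `f` is continuous on `[a,b]` and differentiable outside a
countable set `D`, then the (redefined) derivative `g` is Henstock–Kurzweil integrable
with integral `f b - f a`. -/
theorem hk_ftc_countable_exceptional (a b : ℝ) (hab : a ≤ b) (f g : ℝ → ℝ)
    (D : Set ℝ) (hD : D.Countable)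
    (hf : ContinuousOn f (Set.Icc a b))
    (hdiff : ∀ x ∈ Set.Icc a b \ D, HasDerivWithinAt f (g x) (Set.Icc a b) x)
    (hg0 : ∀ x ∈ D, g x = 0) :
    ∀ ε > 0, ∃ δ : ℝ → ℝ, (∀ y ∈ Set.Icc a b, 0 < δ y) ∧
      ∀ (n : ℕ) (t x : ℕ → ℝ), IsTaggedPartition a b n t x → IsFine δ n t x →
        |RiemannSum g n t x - (f b - f a)| < ε := by
  classical
  intro ε hε
  set c := ε / (2 * (b - a + 1))
  have hc : 0 < c := div_pos hε (by linarith)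
  have hcba : c * (b - a) < ε / 2 := by
    rw [div_mul_eq_mul_div, div_lt_div_iff₀ (by linarith) two_pos]
    nlinarith
  obtain ⟨w, hw, hwD⟩ := hD.exists_pos_forall_sum_le (div_pos hε four_pos)
  have hlocal : ∀ y ∈ Set.Icc a b, ∃ d > 0, ∀ u ∈ Set.Icc a b, ∀ v ∈ Set.Icc a b,
      u ≤ y → y ≤ v → v - u < d →
        |g y * (v - u) - (f v - f u)| ≤ if y ∈ D then w y else c * (v - u) := by
    intro y hy
    by_cases hyD : y ∈ D
    · simpa [hyD, hg0 y hyD, abs_sub_comm] using (hf y hy).exists_abs_sub_le_of_straddle (hw y)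
    · simpa [hyD] using (hdiff y ⟨hy, hyD⟩).exists_abs_sub_le_of_straddle hc
  choose! δ hδ hδ_err using hlocal
  refine ⟨δ, hδ, fun n t x hP hfine => ?_⟩
  calc |RiemannSum g n t x - (f b - f a)|
      ≤ ∑ j ∈ Finset.range n, (if x j ∈ D then w (x j) else c * (t (j + 1) - t j)) :=
        hP.abs_riemannSum_sub_le g f _ fun j hj =>
          hδ_err _ (hP.tag_mem_Icc hj) _ (hP.point_mem_Icc hj.le) _ (hP.point_mem_Icc hj)
            (hP.2.2.2 j hj).1 (hP.2.2.2 j hj).2 (hfine j hj)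
    _ ≤ 2 * (ε / 4) + c * (b - a) :=
        hP.sum_ite_tag_mem_le (fun v => (hw v).le) hwD hc.le
    _ < ε := by linarith
end

section
/- Let F : [a,b] → ℝ be continuous and suppose F is pointwise Lipschitz at all points of [a,b] except countably many. Then F is differentiable at Lebesgue-almost every point of [a,b]. -/
/-- `F` is pointwise Lipschitz at `x` relative to `[a,b]`:
`limsup_{y→x, y∈[a,b]} |F y - F x|/|y - x| < ∞`. -/
def PointwiseLipschitzAt (a b : ℝ) (F : ℝ → ℝ) (x : ℝ) : Prop :=
  ∃ K : ℝ, ∃ r > 0, ∀ y ∈ Set.Icc a b, |y - x| < r → |F y - F x| ≤ K * |y - x|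

/-! Stepanov's argument. Sorting points by Lipschitz constant `K` and radius `r`, and cutting
into pieces of diameter `< r`, the points where `F` is pointwise Lipschitz form a countable union
of sets `S` on each of which `F` is `K`-Lipschitz, hence differentiable within `S` almost
everywhere by Rademacher's theorem. Near a Lebesgue density point `x` of `S`, every `y` has some
`z ∈ S` with `|z - y| = o(|y - x|)`, so the bound `|F y - F z| ≤ K |y - z|` upgrades the derivative
within `S` at `x` to a derivative within `[a, b]`. -/

open MeasureTheory Set Filter Metric Topology
open scoped NNReal

theorem eventually_exists_mem_dist_le_of_density_one {s : Set ℝ} {x : ℝ}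
    (hx : Tendsto (fun r ↦ volume (s ∩ closedBall x r) / volume (closedBall x r)) (𝓝[>] 0) (𝓝 1))
    {ε : ℝ} (hε : 0 < ε) : ∀ᶠ y in 𝓝[≠] x, ∃ z ∈ s, dist z y ≤ ε * dist y x := by
  -- In dimension one, rescaled copies of balls around `1` and `-1` reach every nearby `y ≠ x`.
  have hdir : ∀ c : ℝ, ∀ᶠ r in 𝓝[>] 0, ∃ z ∈ s, dist z (x + r * c) ≤ ε * r := by
    intro c
    filter_upwards [Measure.eventually_nonempty_inter_smul_of_density_one volume s x hx
      (closedBall c ε) measurableSet_closedBall (measure_closedBall_pos volume c hε).ne',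
      self_mem_nhdsWithin] with r ⟨z, hzs, hz⟩ (hr : 0 < r)
    rw [smul_closedBall _ _ hε.le, singleton_add_closedBall, mem_closedBall, Real.norm_eq_abs,
      abs_of_pos hr, smul_eq_mul] at hz
    exact ⟨z, hzs, hz.trans_eq (mul_comm r ε)⟩
  filter_upwards [(tendsto_norm_sub_self_nhdsNE x).eventually ((hdir 1).and (hdir (-1))),
    self_mem_nhdsWithin] with y ⟨hright, hleft⟩ (hy : y ≠ x)
  rw [Real.norm_eq_abs] at hright hleft
  rw [Real.dist_eq y x]
  rcases hy.lt_or_gt with hlt | hgt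
  · have hxy : x + |y - x| * -1 = y := by rw [abs_of_neg (sub_neg.2 hlt)]; ring
    rwa [hxy] at hleft
  · have hxy : x + |y - x| * 1 = y := by rw [abs_of_pos (sub_pos.2 hgt)]; ring
    rwa [hxy] at hright

variable {E : Type*} [NormedAddCommGroup E] [NormedSpace ℝ E]

theorem HasDerivWithinAt.of_density_one_of_lipschitz_near {F : ℝ → E} {f' : E} {s t : Set ℝ}
    {x r₀ : ℝ} {K : ℝ≥0} (hF : HasDerivWithinAt F f' s x)
    (hx : Tendsto (fun r ↦ volume (s ∩ closedBall x r) / volume (closedBall x r)) (𝓝[>] 0) (𝓝 1))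
    (hr₀ : 0 < r₀) (hK : ∀ z ∈ s, ∀ y ∈ t, dist y z < r₀ → dist (F y) (F z) ≤ K * dist y z) :
    HasDerivWithinAt F f' t x := by
  rw [hasDerivWithinAt_iff_isLittleO, Asymptotics.isLittleO_iff] at hF ⊢
  intro c hc
  set C : ℝ := K + ‖f'‖ + 2
  set δ : ℝ := min 1 (c / C)
  have hδ : 0 < δ := lt_min one_pos (by positivity)
  have hδC : δ * C ≤ c := (le_div_iff₀ (by positivity)).1 (min_le_right _ _)
  obtain ⟨ρ, hρ, hFρ⟩ := Metric.mem_nhdsWithin_iff.1 (hF hδ)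
  rw [eventually_nhdsWithin_iff]
  filter_upwards [eventually_nhdsWithin_iff.1 (eventually_exists_mem_dist_le_of_density_one hx hδ),
    ball_mem_nhds x (half_pos hρ), ball_mem_nhds x hr₀] with y hy hyρ hyr₀ hyt
  rcases eq_or_ne y x with rfl | hne
  · simp
  obtain ⟨z, hzs, hzy⟩ := hy hne
  set r := dist y x
  have hzy_le : dist z y ≤ r := hzy.trans (mul_le_of_le_one_left dist_nonneg (min_le_left _ _))
  have hzx : dist z x ≤ 2 * r := (dist_triangle z y x).trans (by linarith)
  have hz : ‖F z - F x - (z - x) • f'‖ ≤ δ * (2 * r) := by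
    refine (hFρ ⟨?_, hzs⟩).trans ?_
    · rw [mem_ball] at hyρ ⊢
      linarith
    · rw [← dist_eq_norm]
      gcongr
  have hFyz : dist (F y) (F z) ≤ K * (δ * r) :=
    (hK z hzs y hyt ((dist_comm y z).trans_lt (hzy_le.trans_lt hyr₀))).trans
      (by rw [dist_comm y z]; gcongr)
  have hzyf : ‖(z - y) • f'‖ ≤ ‖f'‖ * (δ * r) := by
    rw [norm_smul, ← dist_eq_norm, mul_comm]
    gcongr
  calc ‖F y - F x - (y - x) • f'‖
      = ‖(F y - F z) + (F z - F x - (z - x) • f') + (z - y) • f'‖ := by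
        congr 1; simp only [sub_smul]; abel
    _ ≤ dist (F y) (F z) + ‖F z - F x - (z - x) • f'‖ + ‖(z - y) • f'‖ := by
        rw [dist_eq_norm]; exact norm_add₃_le
    _ ≤ δ * C * r := by
        simp only [C]
        linarith
    _ ≤ c * ‖y - x‖ := by
        rw [← dist_eq_norm]
        gcongr

theorem ae_differentiableWithinAt_of_lipschitz_near [FiniteDimensional ℝ E] {F : ℝ → E}
    {s t : Set ℝ} {K : ℝ≥0} {r₀ : ℝ} (hst : s ⊆ t) (hr₀ : 0 < r₀)
    (hK : ∀ z ∈ s, ∀ y ∈ t, dist y z < r₀ → dist (F y) (F z) ≤ K * dist y z) :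
    ∀ᵐ x, x ∈ s → DifferentiableWithinAt ℝ F t x := by
  set d := r₀ / 2
  have hd : 0 < d := half_pos hr₀
  set piece : ℤ → Set ℝ := fun k ↦ s ∩ Icc (k • d) ((k + 1) • d)
  have hpiece : ∀ k, ∀ᵐ x, x ∈ piece k → DifferentiableWithinAt ℝ F t x := by
    intro k
    have hlip : LipschitzOnWith K F (piece k) := by
      refine LipschitzOnWith.of_dist_le_mul fun y hy z hz ↦ hK z hz.1 y (hst hy.1) ?_
      calc dist y z ≤ (k + 1) • d - k • d := Real.dist_le_of_mem_Icc hy.2 hz.2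
        _ = d := by simp only [zsmul_eq_mul, Int.cast_add, Int.cast_one]; ring
        _ < r₀ := half_lt_self hr₀
    filter_upwards [hlip.ae_differentiableWithinAt_of_mem,
      ae_imp_of_ae_restrict (Besicovitch.ae_tendsto_measure_inter_div volume (piece k))]
      with x hdiff hdens hx
    exact ((hdiff hx).hasDerivWithinAt.of_density_one_of_lipschitz_near (hdens hx) hr₀
      fun z hz ↦ hK z hz.1).differentiableWithinAt
  filter_upwards [ae_all_iff.2 hpiece] with x hx hxs
  obtain ⟨k, hk, -⟩ := existsUnique_zsmul_near_of_pos hd x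
  exact hx k ⟨hxs, hk.1, hk.2.le⟩

theorem ae_differentiableWithinAt_of_ae_pointwise_lipschitz [FiniteDimensional ℝ E] {F : ℝ → E}
    {t : Set ℝ} (hF : ∀ᵐ x, x ∈ t → ∃ K : ℝ≥0, ∃ r > 0,
      ∀ y ∈ t, dist y x < r → dist (F y) (F x) ≤ K * dist y x) :
    ∀ᵐ x, x ∈ t → DifferentiableWithinAt ℝ F t x := by
  set A : ℕ → ℕ → Set ℝ := fun m n ↦
    {x ∈ t | ∀ y ∈ t, dist y x < 1 / (n + 1) → dist (F y) (F x) ≤ (m : ℝ≥0) * dist y x}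
  have hA : ∀ m n, ∀ᵐ x, x ∈ A m n → DifferentiableWithinAt ℝ F t x := fun m n ↦
    ae_differentiableWithinAt_of_lipschitz_near (fun _ hx ↦ hx.1) Nat.one_div_pos_of_nat
      fun _ hz ↦ hz.2
  filter_upwards [hF, ae_all_iff.2 fun m ↦ ae_all_iff.2 (hA m)] with x hx hdiff hxt
  obtain ⟨K, r, hr, hK⟩ := hx hxt
  obtain ⟨m, hm⟩ := exists_nat_ge K
  obtain ⟨n, hn⟩ := exists_nat_one_div_lt hr
  refine hdiff m n ⟨hxt, fun y hy hyx ↦ (hK y hy (hyx.trans hn)).trans ?_⟩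
  gcongr

theorem ae_differentiable_of_pointwiseLipschitz_general (a b : ℝ) (F : ℝ → ℝ)
    (D : Set ℝ) (hD : D.Countable)
    (hLip : ∀ x ∈ Set.Icc a b \ D, PointwiseLipschitzAt a b F x) :
    ∀ᵐ x ∂(MeasureTheory.volume.restrict (Set.Icc a b)),
      DifferentiableWithinAt ℝ F (Set.Icc a b) x := by
  rw [ae_restrict_iff' measurableSet_Icc]
  refine ae_differentiableWithinAt_of_ae_pointwise_lipschitz ?_
  filter_upwards [hD.ae_notMem volume] with x hxD hx
  obtain ⟨K, r, hr, hK⟩ := hLip x ⟨hx, hxD⟩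
  refine ⟨K.toNNReal, r, hr, fun y hy hyx ↦ ?_⟩
  rw [Real.dist_eq] at hyx
  rw [Real.dist_eq, Real.dist_eq]
  exact (hK y hy hyx).trans (by gcongr; exact Real.le_coe_toNNReal K)

/-- A continuous function on `[a,b]` that is pointwise Lipschitz at all but countably
many points is differentiable almost everywhere on `[a,b]`. -/
theorem ae_differentiable_of_pointwiseLipschitz (a b : ℝ) (F : ℝ → ℝ)
    (hF : ContinuousOn F (Set.Icc a b)) (D : Set ℝ) (hD : D.Countable)
    (hLip : ∀ x ∈ Set.Icc a b \ D, PointwiseLipschitzAt a b F x) :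
    ∀ᵐ x ∂(MeasureTheory.volume.restrict (Set.Icc a b)),
      DifferentiableWithinAt ℝ F (Set.Icc a b) x :=
  ae_differentiable_of_pointwiseLipschitz_general a b F D hD hLip
end

section
/- Equiintegrable (controlled) convergence theorem: Let (fₙ) be HK integrable functions on [a,b] with fₙ(x) → f(x) for all x, and suppose that for every ε > 0 there exists a positive gauge δ on [a,b] such that for all n and all δ-fine tagged partitions P of [a,b], |σ(fₙ,P) - ∫fₙ| < ε. Then f is HK integrable on [a,b] and ∫f = limₙ ∫fₙ. -/
/-- `f` is Henstock–Kurzweil integrable on `[a,b]` with integral `α`. -/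
def HKIntegral (a b : ℝ) (f : ℝ → ℝ) (α : ℝ) : Prop :=
  ∀ ε > 0, ∃ δ : ℝ → ℝ, (∀ y ∈ Set.Icc a b, 0 < δ y) ∧
    ∀ (n : ℕ) (t x : ℕ → ℝ), IsTaggedPartition a b n t x → IsFine δ n t x →
      |RiemannSum f n t x - α| < ε

/-- Extend a fine tagged partition of `[a,y]` by one interval `[y,d]` with tag `c`. -/
lemma extend_partition {a y d c : ℝ} {δ : ℝ → ℝ} {n : ℕ} {t x : ℕ → ℝ}
    (hpt : IsTaggedPartition a y n t x) (hfine : IsFine δ n t x)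
    (hyd : y < d) (hc1 : y ≤ c) (hc2 : c ≤ d) (hlen : d - y < δ c) :
    ∃ m t' x', IsTaggedPartition a d m t' x' ∧ IsFine δ m t' x' := by
  obtain ⟨h0, hn, hmono, htag⟩ := hpt
  refine ⟨n + 1, fun j => if j ≤ n then t j else d, fun j => if j < n then x j else c,
    ⟨by simp [h0], by simp, ?_, ?_⟩, ?_⟩
  · intro j hj
    rcases Nat.lt_or_ge j n with h | h
    · simpa [Nat.le_of_lt h, Nat.succ_le_of_lt h] using hmono j h
    · have hjn : j = n := by omega
      subst hjn
      simpa [hn] using hyd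
  · intro j hj
    rcases Nat.lt_or_ge j n with h | h
    · simpa [h, Nat.le_of_lt h, Nat.succ_le_of_lt h] using htag j h
    · have hjn : j = n := by omega
      subst hjn
      simp only [lt_irrefl, if_neg, le_refl, if_pos, Nat.not_succ_le_self, not_false_iff]
      exact ⟨by simpa [hn] using hc1, hc2⟩
  · intro j hj
    rcases Nat.lt_or_ge j n with h | h
    · simpa [h, Nat.le_of_lt h, Nat.succ_le_of_lt h] using hfine j h
    · have hjn : j = n := by omega
      subst hjn
      simpa [hn] using hlen

/-- Cousin's lemma: every positive gauge on `[a,b]` admits a fine tagged partition. -/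
lemma cousin (a b : ℝ) (hab : a ≤ b) (δ : ℝ → ℝ) (hδ : ∀ y ∈ Set.Icc a b, 0 < δ y) :
    ∃ n t x, IsTaggedPartition a b n t x ∧ IsFine δ n t x := by
  set S : Set ℝ := {y | y ∈ Set.Icc a b ∧
    ∃ n t x, IsTaggedPartition a y n t x ∧ IsFine δ n t x} with hS
  have haS : a ∈ S := by
    refine ⟨⟨le_refl a, hab⟩, 0, fun _ => a, fun _ => a, ⟨rfl, rfl, ?_, ?_⟩, ?_⟩ <;>
      exact fun j hj => absurd hj (Nat.not_lt_zero j)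
  have hbdd : BddAbove S := ⟨b, fun y hy => hy.1.2⟩
  have hne : S.Nonempty := ⟨a, haS⟩
  set c := sSup S with hc
  have hac : a ≤ c := le_csSup hbdd haS
  have hcb : c ≤ b := csSup_le hne (fun y hy => hy.1.2)
  have hδc : 0 < δ c := hδ c ⟨hac, hcb⟩
  obtain ⟨y, hyS, hylt⟩ := exists_lt_of_lt_csSup hne (show c - δ c / 2 < c by linarith)
  have hyc : y ≤ c := le_csSup hbdd hyS
  obtain ⟨⟨hay, hyb⟩, n, t, x, hpt, hfine⟩ := hyS
  rcases eq_or_lt_of_le hyb with hyeq | hylt'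
  · subst hyeq
    exact ⟨n, t, x, hpt, hfine⟩
  · set d := min b (c + δ c / 2) with hd
    have hcd : c ≤ d := le_min hcb (by linarith)
    have hyd : y < d := lt_min hylt' (lt_of_le_of_lt hyc (by linarith))
    have hdb : d ≤ b := min_le_left _ _
    have hdlen : d - y < δ c := by
      have : d ≤ c + δ c / 2 := min_le_right _ _
      linarith
    obtain ⟨m, t', x', hpt', hfine'⟩ :=
      extend_partition hpt hfine hyd hyc hcd hdlen
    have hdS : d ∈ S := ⟨⟨le_trans hay (le_of_lt hyd), hdb⟩, m, t', x', hpt', hfine'⟩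
    have hdc : d ≤ c := le_csSup hbdd hdS
    -- then c = b, since otherwise d > c
    have hcb' : c = b := by
      by_contra hne'
      have hclt : c < b := lt_of_le_of_ne hcb hne'
      have : c < d := lt_min hclt (by linarith)
      linarith
    have hdb' : d = b := (le_antisymm hdc hcd).trans hcb'
    exact hdb' ▸ ⟨m, t', x', hpt', hfine'⟩

/-- Controlled (equiintegrable) convergence theorem for the HK integral:
if `f n → g` pointwise and the `f n` are HK equiintegrable, then `g` is HK
integrable and its integral is the limit of the integrals. -/
theorem hk_controlled_convergence (a b : ℝ) (hab : a ≤ b)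
    (f : ℕ → ℝ → ℝ) (g : ℝ → ℝ) (α : ℕ → ℝ)
    (hint : ∀ n, HKIntegral a b (f n) (α n))
    (hlim : ∀ x, Filter.Tendsto (fun n => f n x) Filter.atTop (nhds (g x)))
    (hequi : ∀ ε > 0, ∃ δ : ℝ → ℝ, (∀ y ∈ Set.Icc a b, 0 < δ y) ∧
      ∀ n, ∀ (p : ℕ) (t x : ℕ → ℝ), IsTaggedPartition a b p t x → IsFine δ p t x →
        |RiemannSum (f n) p t x - α n| < ε) :
    ∃ β : ℝ, Filter.Tendsto α Filter.atTop (nhds β) ∧ HKIntegral a b g β := by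
  -- α is Cauchy
  have hcauchy : CauchySeq α := by
    rw [Metric.cauchySeq_iff]
    intro ε hε
    obtain ⟨δ, hδpos, hδ⟩ := hequi (ε / 4) (by positivity)
    obtain ⟨p, t, x, hpart, hfine⟩ := cousin a b hab δ hδpos
    have hσ : Filter.Tendsto (fun n => RiemannSum (f n) p t x) Filter.atTop
        (nhds (RiemannSum g p t x)) := by
      unfold RiemannSum
      exact tendsto_finset_sum _ (fun j _ => (hlim (x j)).mul_const _)
    obtain ⟨N, hN⟩ := Metric.cauchySeq_iff.mp hσ.cauchySeq (ε / 4) (by positivity)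
    refine ⟨N, fun m hm k hk => ?_⟩
    have h1 : |RiemannSum (f m) p t x - α m| < ε / 4 := hδ m p t x hpart hfine
    have h2 : |RiemannSum (f k) p t x - α k| < ε / 4 := hδ k p t x hpart hfine
    have h3 : dist (RiemannSum (f m) p t x) (RiemannSum (f k) p t x) < ε / 4 := hN m hm k hk
    rw [Real.dist_eq] at h3 ⊢
    have habs1 := abs_sub_abs_le_abs_sub (RiemannSum (f m) p t x - α m) (RiemannSum (f m) p t x - α k)
    calc |α m - α k| = |(α m - RiemannSum (f m) p t x) +
          (RiemannSum (f m) p t x - RiemannSum (f k) p t x) +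
          (RiemannSum (f k) p t x - α k)| := by ring_nf
      _ ≤ |α m - RiemannSum (f m) p t x| +
          |RiemannSum (f m) p t x - RiemannSum (f k) p t x| +
          |RiemannSum (f k) p t x - α k| := abs_add_three _ _ _
      _ < ε := by
          rw [abs_sub_comm (α m)] at *
          linarith
  obtain ⟨β, hβ⟩ := cauchySeq_tendsto_of_complete hcauchy
  refine ⟨β, hβ, ?_⟩
  intro ε hε
  obtain ⟨δ, hδpos, hδ⟩ := hequi (ε / 3) (by positivity)
  refine ⟨δ, hδpos, ?_⟩
  intro p t x hpart hfine
  have h1 : Filter.Tendsto (fun n => RiemannSum (f n) p t x) Filter.atTop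
      (nhds (RiemannSum g p t x)) := by
    unfold RiemannSum
    exact tendsto_finset_sum _ (fun j _ => (hlim (x j)).mul_const _)
  obtain ⟨N1, hN1⟩ := Metric.tendsto_atTop.mp h1 (ε / 3) (by positivity)
  obtain ⟨N2, hN2⟩ := Metric.tendsto_atTop.mp hβ (ε / 3) (by positivity)
  set n := max N1 N2 with hn
  have e1 : |RiemannSum (f n) p t x - RiemannSum g p t x| < ε / 3 := by
    have := hN1 n (le_max_left _ _)
    rwa [Real.dist_eq] at this
  have e2 : |α n - β| < ε / 3 := by
    have := hN2 n (le_max_right _ _)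
    rwa [Real.dist_eq] at this
  have e3 : |RiemannSum (f n) p t x - α n| < ε / 3 := hδ n p t x hpart hfine
  calc |RiemannSum g p t x - β|
      = |(RiemannSum g p t x - RiemannSum (f n) p t x) +
        (RiemannSum (f n) p t x - α n) + (α n - β)| := by ring_nf
    _ ≤ |RiemannSum g p t x - RiemannSum (f n) p t x| +
        |RiemannSum (f n) p t x - α n| + |α n - β| := abs_add_three _ _ _
    _ < ε := by
        rw [abs_sub_comm (RiemannSum g p t x)]
        linarith
end

section
/- Saks–Henstock Lemma: Let f be HK integrable on [a,b] and let ε > 0 with δ a positive gauge such that |σ(f,P) - ∫_a^b f| < ε for every δ-fine tagged partition P of [a,b]. Then for every δ-fine tagged family (([aⱼ,bⱼ],xⱼ))_{j=1}^p in [a,b] (finitely many nonoverlapping tagged subintervals, not necessarily covering [a,b]), one has Σⱼ |f(xⱼ)(bⱼ - aⱼ) - ∫_{aⱼ}^{bⱼ} f| ≤ 2ε. -/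
/-- `(p, c, d, x)` is a tagged family in `[a,b]`: finitely many nonoverlapping
(ordered) nondegenerate closed subintervals `[c j, d j]` of `[a,b]` with tags
`x j ∈ [c j, d j]`. -/
def IsTaggedFamily (a b : ℝ) (p : ℕ) (c d x : ℕ → ℝ) : Prop :=
  (∀ j < p, a ≤ c j ∧ c j < d j ∧ d j ≤ b) ∧
    (∀ j, j + 1 < p → d j ≤ c (j + 1)) ∧
    ∀ j < p, x j ∈ Set.Icc (c j) (d j)

def IsFamilyFine (δ : ℝ → ℝ) (p : ℕ) (c d x : ℕ → ℝ) : Prop :=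
  ∀ j < p, d j - c j < δ (x j)

/-!
Fix a subfamily `S` of the tagged intervals and list all endpoints as a chain
`a = w 0 ≤ w 1 ≤ ⋯ ≤ w (2p+1) = b`. Every piece not in `S` carries an integral (Cauchy criterion:
`ℝ` is complete) that is a limit of `δ`-fine Riemann sums over that piece (Cousin's lemma).
Concatenating these with the tagged intervals of `S` gives `δ`-fine partitions of `[a,b]`, so
additivity of the integral yields `|∑_{j ∈ S} (f (x j) * (d j - c j) - F j)| ≤ ε`. Taking for `S`
the indices where the deviation is nonnegative, resp. negative, gives `2 * ε`.
-/

open Set Filter Topology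

def appendSeq (n : ℕ) (t t' : ℕ → ℝ) (k : ℕ) : ℝ := if k < n then t k else t' (k - n)

section appendSeq

variable {n m : ℕ} {t t' x x' : ℕ → ℝ}

lemma appendSeq_of_lt {k : ℕ} (hk : k < n) : appendSeq n t t' k = t k := if_pos hk

lemma appendSeq_add (k : ℕ) : appendSeq n t t' (n + k) = t' k := by
  simp [appendSeq]

lemma appendSeq_of_le (hv : t n = t' 0) {k : ℕ} (hk : k ≤ n) : appendSeq n t t' k = t k := by
  rcases hk.lt_or_eq with hk | rfl
  · exact appendSeq_of_lt hk
  · simpa [hv] using appendSeq_add (n := k) (t := t) (t' := t') 0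

lemma forall_appendSeq {Q : ℝ → ℝ → ℝ → Prop} (hv : t n = t' 0)
    (h : ∀ j < n, Q (t j) (t (j + 1)) (x j)) (h' : ∀ j < m, Q (t' j) (t' (j + 1)) (x' j)) :
    ∀ j < n + m, Q (appendSeq n t t' j) (appendSeq n t t' (j + 1)) (appendSeq n x x' j) := by
  intro j hj
  rcases lt_or_ge j n with hjn | hjn
  · rw [appendSeq_of_lt hjn, appendSeq_of_le hv hjn, appendSeq_of_lt hjn]
    exact h j hjn
  · obtain ⟨k, rfl⟩ := Nat.exists_eq_add_of_le hjn
    rw [add_assoc, appendSeq_add, appendSeq_add, appendSeq_add]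
    exact h' k (by omega)

lemma sum_appendSeq (hv : t n = t' 0) (g : ℝ → ℝ → ℝ → ℝ) :
    ∑ j ∈ Finset.range (n + m), g (appendSeq n t t' j) (appendSeq n t t' (j + 1))
        (appendSeq n x x' j) =
      ∑ j ∈ Finset.range n, g (t j) (t (j + 1)) (x j) +
        ∑ j ∈ Finset.range m, g (t' j) (t' (j + 1)) (x' j) := by
  rw [Finset.sum_range_add]
  congr 1
  · refine Finset.sum_congr rfl fun j hj => ?_
    have hjn := Finset.mem_range.1 hj
    rw [appendSeq_of_lt hjn, appendSeq_of_le hv hjn, appendSeq_of_lt hjn]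
  · simp only [add_assoc, appendSeq_add]

end appendSeq

lemma abs_sub_le_of_mem_closure {S : Set ℝ} {T α ε : ℝ} (h : ∀ s ∈ S, |s - α| < ε)
    (hT : T ∈ closure S) : |T - α| ≤ ε := by
  have hball : S ⊆ Metric.ball α ε := fun s hs => by
    rw [Metric.mem_ball, Real.dist_eq]
    exact h s hs
  simpa [Real.dist_eq] using Metric.closure_ball_subset_closedBall (closure_mono hball hT)

def fineRiemannSums (f γ : ℝ → ℝ) (u v : ℝ) : Set ℝ :=
  {s | ∃ n t x, IsTaggedPartition u v n t x ∧ IsFine γ n t x ∧ RiemannSum f n t x = s}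

section fineRiemannSums

variable {f γ : ℝ → ℝ} {u v w : ℝ}

lemma zero_mem_fineRiemannSums : (0 : ℝ) ∈ fineRiemannSums f γ u u :=
  ⟨0, fun _ => u, fun _ => u, ⟨rfl, rfl, by simp, by simp⟩, by simp [IsFine], by
    simp [RiemannSum]⟩

lemma mul_sub_mem_fineRiemannSums {τ : ℝ} (huv : u < v) (hτ : τ ∈ Icc u v)
    (hγ : v - u < γ τ) : f τ * (v - u) ∈ fineRiemannSums f γ u v :=
  ⟨1, fun k => if k = 0 then u else v, fun _ => τ, ⟨rfl, rfl, by simpa using huv,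
    by simpa using hτ⟩, by simpa [IsFine] using hγ, by simp [RiemannSum]⟩

lemma add_mem_fineRiemannSums {s s' : ℝ} (hs : s ∈ fineRiemannSums f γ u v)
    (hs' : s' ∈ fineRiemannSums f γ v w) : s + s' ∈ fineRiemannSums f γ u w := by
  obtain ⟨n, t, x, ⟨ht0, htn, hlt, htag⟩, hfine, rfl⟩ := hs
  obtain ⟨m, t', x', ⟨ht0', htm', hlt', htag'⟩, hfine', rfl⟩ := hs'
  have hv : t n = t' 0 := htn.trans ht0'.symm
  refine ⟨n + m, appendSeq n t t', appendSeq n x x',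
    ⟨?_, ?_, forall_appendSeq (x := x) (x' := x') (Q := fun l r _ => l < r) hv hlt hlt',
      forall_appendSeq (Q := fun l r τ => τ ∈ Icc l r) hv htag htag'⟩,
    forall_appendSeq (Q := fun l r τ => r - l < γ τ) hv hfine hfine',
    sum_appendSeq hv fun l r τ => f τ * (r - l)⟩
  · rw [appendSeq_of_le hv n.zero_le, ht0]
  · rw [appendSeq_add, htm']

lemma fineRiemannSums_mono {γ' : ℝ → ℝ} (hle : γ ≤ γ') :
    fineRiemannSums f γ u v ⊆ fineRiemannSums f γ' u v :=
  fun _ ⟨n, t, x, hP, hfine, hs⟩ => ⟨n, t, x, hP, fun j hj => (hfine j hj).trans_le (hle _), hs⟩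

-- Cousin's lemma
theorem fineRiemannSums_nonempty (huv : u ≤ v) (hγ : ∀ y ∈ Icc u v, 0 < γ y) :
    (fineRiemannSums f γ u v).Nonempty := by
  set S := {y ∈ Icc u v | (fineRiemannSums f γ u y).Nonempty}
  have huS : u ∈ S := ⟨left_mem_Icc.2 huv, 0, zero_mem_fineRiemannSums⟩
  have hbdd : BddAbove S := ⟨v, fun y hy => hy.1.2⟩
  set σ := sSup S
  have hσ : σ ∈ Icc u v := ⟨le_csSup hbdd huS, csSup_le ⟨u, huS⟩ fun y hy => hy.1.2⟩
  have hγσ := hγ σ hσ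
  have extend : ∀ y ∈ S, ∀ z ∈ Icc u v, y < z → ∀ τ ∈ Icc y z, z - y < γ τ → z ∈ S :=
    fun y ⟨_, s, hs⟩ z hz hyz τ hτ hzy =>
      ⟨hz, _, add_mem_fineRiemannSums hs (mul_sub_mem_fineRiemannSums hyz hτ hzy)⟩
  have hσS : σ ∈ S := by
    obtain ⟨y, hyS, hy⟩ := exists_lt_of_lt_csSup ⟨u, huS⟩ (sub_lt_self σ hγσ)
    rcases (le_csSup hbdd hyS).lt_or_eq with hyσ | rfl
    · exact extend y hyS σ hσ hyσ σ ⟨hyσ.le, le_rfl⟩ (by linarith)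
    · exact hyS
  rcases hσ.2.lt_or_eq with hσv | hσv
  · set z := min v (σ + γ σ / 2)
    have hσz : σ < z := lt_min hσv (by linarith)
    have hzS : z ∈ S := extend σ hσS z ⟨hσ.1.trans hσz.le, min_le_left _ _⟩ hσz σ
      ⟨le_rfl, hσz.le⟩ (by linarith [min_le_right v (σ + γ σ / 2)])
    exact absurd (le_csSup hbdd hzS) hσz.not_ge
  · exact hσv ▸ hσS.2

lemma hkIntegral_iff {α : ℝ} : HKIntegral u v f α ↔ ∀ ε > 0, ∃ γ : ℝ → ℝ,
    (∀ y ∈ Icc u v, 0 < γ y) ∧ ∀ s ∈ fineRiemannSums f γ u v, |s - α| < ε := by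
  refine forall₂_congr fun ε _ => exists_congr fun γ => and_congr_right fun _ => ?_
  exact ⟨fun h _ ⟨n, t, x, hP, hfine, hs⟩ => hs ▸ h n t x hP hfine,
    fun h n t x hP hfine => h _ ⟨n, t, x, hP, hfine, rfl⟩⟩

def fineRiemannSumFilter (f : ℝ → ℝ) (u v : ℝ) : Filter ℝ :=
  ⨅ γ ∈ {γ : ℝ → ℝ | ∀ y ∈ Icc u v, 0 < γ y}, 𝓟 (fineRiemannSums f γ u v)

lemma hasBasis_fineRiemannSumFilter : (fineRiemannSumFilter f u v).HasBasis
    (fun γ => ∀ y ∈ Icc u v, 0 < γ y) (fineRiemannSums f · u v) :=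
  hasBasis_biInf_principal
    (fun γ hγ γ' hγ' => ⟨fun y => min (γ y) (γ' y), fun y hy => lt_min (hγ y hy) (hγ' y hy),
      fineRiemannSums_mono fun _ => min_le_left _ _,
      fineRiemannSums_mono fun _ => min_le_right _ _⟩)
    ⟨fun _ => 1, fun _ _ => one_pos⟩

lemma fineRiemannSumFilter_neBot (huv : u ≤ v) : (fineRiemannSumFilter f u v).NeBot :=
  hasBasis_fineRiemannSumFilter.neBot_iff.2 fun hγ => fineRiemannSums_nonempty huv hγ

lemma hkIntegral_iff_le_nhds {α : ℝ} :
    HKIntegral u v f α ↔ fineRiemannSumFilter f u v ≤ 𝓝 α := by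
  rw [hasBasis_fineRiemannSumFilter.le_basis_iff Metric.nhds_basis_ball, hkIntegral_iff]
  simp only [subset_def, Metric.mem_ball, Real.dist_eq]

lemma sum_mem_closure_fineRiemannSums {w T : ℕ → ℝ} (m : ℕ)
    (hT : ∀ i < m, T i ∈ closure (fineRiemannSums f γ (w i) (w (i + 1)))) :
    ∑ i ∈ Finset.range m, T i ∈ closure (fineRiemannSums f γ (w 0) (w m)) := by
  induction m with
  | zero => exact subset_closure zero_mem_fineRiemannSums
  | succ m ih =>
    rw [Finset.sum_range_succ]
    exact map_mem_closure₂ continuous_add (ih fun i hi => hT i (by omega)) (hT m m.lt_succ_self)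
      fun _ hs _ hs' => add_mem_fineRiemannSums hs hs'

end fineRiemannSums

namespace HKIntegral

variable {f : ℝ → ℝ} {u v α : ℝ}

lemma mem_closure_fineRiemannSums (hα : HKIntegral u v f α) (huv : u ≤ v) {γ : ℝ → ℝ}
    (hγ : ∀ y ∈ Icc u v, 0 < γ y) : α ∈ closure (fineRiemannSums f γ u v) :=
  have := fineRiemannSumFilter_neBot (f := f) huv
  mem_closure_of_tendsto (tendsto_id'.2 (hkIntegral_iff_le_nhds.1 hα))
    (hasBasis_fineRiemannSumFilter.mem_of_mem hγ)

lemma eq_of_forall_mem_closure (hα : HKIntegral u v f α) {T : ℝ}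
    (hT : ∀ γ : ℝ → ℝ, (∀ y ∈ Icc u v, 0 < γ y) → T ∈ closure (fineRiemannSums f γ u v)) :
    T = α :=
  eq_of_forall_dist_le fun η hη => by
    obtain ⟨γ, hγ, hγα⟩ := hkIntegral_iff.1 hα η hη
    rw [Real.dist_eq]
    exact abs_sub_le_of_mem_closure hγα (hT γ hγ)

lemma unique (hα : HKIntegral u v f α) (huv : u ≤ v) {β : ℝ} (hβ : HKIntegral u v f β) :
    α = β :=
  hβ.eq_of_forall_mem_closure fun _ hγ => hα.mem_closure_fineRiemannSums huv hγ

theorem exists_of_le {a b I : ℝ} (hf : HKIntegral a b f I) (hau : a ≤ u) (huv : u ≤ v)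
    (hvb : v ≤ b) : ∃ G, HKIntegral u v f G := by
  have := fineRiemannSumFilter_neBot (f := f) huv
  have hcauchy : Cauchy (fineRiemannSumFilter f u v) := by
    refine Metric.cauchy_iff.2 ⟨inferInstance, fun η hη => ?_⟩
    obtain ⟨γ, hγ, hγI⟩ := hkIntegral_iff.1 hf (η / 2) (half_pos hη)
    obtain ⟨l, hl⟩ := fineRiemannSums_nonempty (f := f) hau
      fun y hy => hγ y ⟨hy.1, hy.2.trans (huv.trans hvb)⟩
    obtain ⟨r, hr⟩ := fineRiemannSums_nonempty (f := f) hvb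
      fun y hy => hγ y ⟨(hau.trans huv).trans hy.1, hy.2⟩
    refine ⟨_, hasBasis_fineRiemannSumFilter.mem_of_mem
      fun y hy => hγ y ⟨hau.trans hy.1, hy.2.trans hvb⟩, fun s hs s' hs' => ?_⟩
    -- `s` and `s'` extend to `γ`-fine Riemann sums over `[a,b]` by the same sums `l` and `r`
    have h := abs_lt.1 (hγI _ (add_mem_fineRiemannSums (add_mem_fineRiemannSums hl hs) hr))
    have h' := abs_lt.1 (hγI _ (add_mem_fineRiemannSums (add_mem_fineRiemannSums hl hs') hr))
    rw [Real.dist_eq, abs_lt]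
    constructor <;> linarith
  obtain ⟨G, hG⟩ := CompleteSpace.complete hcauchy
  exact ⟨G, hkIntegral_iff_le_nhds.2 hG⟩

lemma sum_eq_of_chain {w H : ℕ → ℝ} {m : ℕ} {I : ℝ} (hw : Monotone w)
    (hf : HKIntegral (w 0) (w m) f I) (hH : ∀ i < m, HKIntegral (w i) (w (i + 1)) f (H i)) :
    ∑ i ∈ Finset.range m, H i = I :=
  hf.eq_of_forall_mem_closure fun _ hγ => sum_mem_closure_fineRiemannSums m fun i hi =>
    (hH i hi).mem_closure_fineRiemannSums (hw (Nat.le_add_right i 1))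
      fun y hy => hγ y (Icc_subset_Icc (hw i.zero_le) (hw hi) hy)

end HKIntegral

theorem abs_sum_sub_le_of_chain {f δ : ℝ → ℝ} {w H s : ℕ → ℝ} {m : ℕ} {I ε : ℝ}
    (hw : Monotone w) (hf : HKIntegral (w 0) (w m) f I)
    (hδpos : ∀ y ∈ Icc (w 0) (w m), 0 < δ y)
    (hδ : ∀ r ∈ fineRiemannSums f δ (w 0) (w m), |r - I| < ε)
    (hH : ∀ i < m, HKIntegral (w i) (w (i + 1)) f (H i)) {A : Finset ℕ}
    (hA : A ⊆ Finset.range m) (hs : ∀ i ∈ A, s i ∈ fineRiemannSums f δ (w i) (w (i + 1))) :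
    |∑ i ∈ A, (s i - H i)| ≤ ε := by
  have hT : ∑ i ∈ Finset.range m, (if i ∈ A then s i else H i) ∈
      closure (fineRiemannSums f δ (w 0) (w m)) :=
    sum_mem_closure_fineRiemannSums m fun i hi => by
      split_ifs with hiA
      · exact subset_closure (hs i hiA)
      · exact (hH i hi).mem_closure_fineRiemannSums (hw (Nat.le_add_right i 1))
          fun y hy => hδpos y (Icc_subset_Icc (hw i.zero_le) (hw hi) hy)
  have hsplit : ∑ i ∈ Finset.range m, (if i ∈ A then s i else H i) - I =
      ∑ i ∈ A, (s i - H i) := by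
    rw [← hf.sum_eq_of_chain hw hH, ← Finset.sum_sub_distrib]
    calc ∑ i ∈ Finset.range m, ((if i ∈ A then s i else H i) - H i)
        = ∑ i ∈ Finset.range m, (if i ∈ A then s i - H i else 0) :=
          Finset.sum_congr rfl fun i _ => by split_ifs <;> simp
      _ = ∑ i ∈ A, (s i - H i) := by rw [Finset.sum_ite_mem, Finset.inter_eq_right.2 hA]
  rw [← hsplit]
  exact abs_sub_le_of_mem_closure hδ hT

/-- The chain `a, c 0, d 0, c 1, d 1, …, c (p-1), d (p-1), b, b, …`. -/
def familyChain (a b : ℝ) (p : ℕ) (c d : ℕ → ℝ) : ℕ → ℝ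
  | 0 => a
  | i + 1 => if p ≤ i / 2 then b else if i % 2 = 0 then c (i / 2) else d (i / 2)

section familyChain

variable {a b : ℝ} {p : ℕ} {c d : ℕ → ℝ}

lemma familyChain_odd (j : ℕ) :
    familyChain a b p c d (2 * j + 1) = if j < p then c j else b := by
  simp only [familyChain, Nat.mul_div_cancel_left j two_pos, Nat.mul_mod_right, ↓reduceIte]
  split_ifs <;> first | rfl | omega

lemma familyChain_even (j : ℕ) :
    familyChain a b p c d (2 * j + 2) = if j < p then d j else b := by
  simp only [familyChain, show (2 * j + 1) / 2 = j by omega, show (2 * j + 1) % 2 = 1 by omega,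
    one_ne_zero, ↓reduceIte]
  split_ifs <;> first | rfl | omega

lemma monotone_familyChain {x : ℕ → ℝ} (hab : a ≤ b) (hfam : IsTaggedFamily a b p c d x) :
    Monotone (familyChain a b p c d) := by
  obtain ⟨hsub, hsep, -⟩ := hfam
  refine monotone_nat_of_le_succ fun i => ?_
  obtain ⟨j, rfl | rfl⟩ := Nat.even_or_odd' i
  · cases j with
    | zero =>
      change a ≤ familyChain a b p c d (2 * 0 + 1)
      rw [familyChain_odd]
      split_ifs with h
      exacts [(hsub 0 h).1, hab]
    | succ k =>
      rw [show 2 * (k + 1) = 2 * k + 2 by ring, familyChain_even,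
        show 2 * k + 2 + 1 = 2 * (k + 1) + 1 by ring, familyChain_odd]
      split_ifs with h h' h'
      exacts [hsep k h', (hsub k h).2.2, by omega, le_rfl]
  · rw [familyChain_odd, familyChain_even]
    split_ifs with h
    exacts [(hsub j h).2.1.le, le_rfl]

end familyChain

theorem abs_sum_sub_le_of_subset {a b I ε : ℝ} {f δ : ℝ → ℝ} {p : ℕ} {c d x F : ℕ → ℝ}
    (hab : a ≤ b) (hf : HKIntegral a b f I) (hδpos : ∀ y ∈ Icc a b, 0 < δ y)
    (hδ : ∀ r ∈ fineRiemannSums f δ a b, |r - I| < ε) (hfam : IsTaggedFamily a b p c d x)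
    (hfine : IsFamilyFine δ p c d x) (hF : ∀ j < p, HKIntegral (c j) (d j) f (F j))
    {S : Finset ℕ} (hS : S ⊆ Finset.range p) :
    |∑ j ∈ S, (f (x j) * (d j - c j) - F j)| ≤ ε := by
  set w := familyChain a b p c d
  have hw : Monotone w := monotone_familyChain hab hfam
  have hwb : w (2 * p + 1) = b := by simp [w, familyChain_odd]
  have hpiece : ∀ j < p, w (2 * j + 1) = c j ∧ w (2 * j + 1 + 1) = d j := fun j hj => by
    simp [w, familyChain_odd, familyChain_even, hj]
  rw [← hwb] at hf hδpos hδ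
  choose! H hH using fun i (hi : i < 2 * p + 1) =>
    hf.exists_of_le (hw i.zero_le) (hw (Nat.le_add_right i 1)) (hw hi)
  have hHF : ∀ j < p, H (2 * j + 1) = F j := fun j hj => by
    have h := hH (2 * j + 1) (by omega)
    rw [(hpiece j hj).1, (hpiece j hj).2] at h
    exact h.unique (hfam.1 j hj).2.1.le (hF j hj)
  have hA : S.image (2 * · + 1) ⊆ Finset.range (2 * p + 1) := fun i hi => by
    obtain ⟨j, hj, rfl⟩ := Finset.mem_image.1 hi
    have := Finset.mem_range.1 (hS hj)
    exact Finset.mem_range.2 (by omega)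
  have hs : ∀ i ∈ S.image (2 * · + 1),
      f (x (i / 2)) * (w (i + 1) - w i) ∈ fineRiemannSums f δ (w i) (w (i + 1)) := fun i hi => by
    obtain ⟨j, hj, rfl⟩ := Finset.mem_image.1 hi
    have hj := Finset.mem_range.1 (hS hj)
    simp only [show (2 * j + 1) / 2 = j by omega, (hpiece j hj).1, (hpiece j hj).2]
    exact mul_sub_mem_fineRiemannSums (hfam.1 j hj).2.1 (hfam.2.2 j hj) (hfine j hj)
  have key := abs_sum_sub_le_of_chain hw hf hδpos hδ hH hA hs
  rw [Finset.sum_image fun _ _ _ _ h => by omega] at key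
  convert key using 3 with j hj
  have hj := Finset.mem_range.1 (hS hj)
  simp only [show (2 * j + 1) / 2 = j by omega, (hpiece j hj).1, (hpiece j hj).2, hHF j hj]

lemma sum_abs_le_two_mul_of_forall_subset {ι : Type*} {s : Finset ι} {g : ι → ℝ} {ε : ℝ}
    (h : ∀ S ⊆ s, |∑ i ∈ S, g i| ≤ ε) : ∑ i ∈ s, |g i| ≤ 2 * ε := by
  classical
  calc ∑ i ∈ s, |g i|
      = ∑ i ∈ s.filter (0 ≤ g ·), g i + -∑ i ∈ s.filter (¬0 ≤ g ·), g i := by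
        rw [← Finset.sum_filter_add_sum_filter_not s (0 ≤ g ·), ← Finset.sum_neg_distrib]
        congr 1 <;> refine Finset.sum_congr rfl fun i hi => ?_
        · exact abs_of_nonneg (Finset.mem_filter.1 hi).2
        · exact abs_of_neg (not_le.1 (Finset.mem_filter.1 hi).2)
    _ ≤ ε + ε := add_le_add ((le_abs_self _).trans (h _ (Finset.filter_subset _ _)))
        ((neg_le_abs _).trans (h _ (Finset.filter_subset _ _)))
    _ = 2 * ε := (two_mul ε).symm

theorem saks_henstock_general (a b : ℝ) (hab : a ≤ b) (f : ℝ → ℝ) (I : ℝ)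
    (hf : HKIntegral a b f I) (ε : ℝ) (δ : ℝ → ℝ)
    (hδpos : ∀ y ∈ Set.Icc a b, 0 < δ y)
    (hδ : ∀ (n : ℕ) (t x : ℕ → ℝ), IsTaggedPartition a b n t x → IsFine δ n t x →
      |RiemannSum f n t x - I| < ε)
    (p : ℕ) (c d x : ℕ → ℝ) (hfam : IsTaggedFamily a b p c d x)
    (hfine : IsFamilyFine δ p c d x)
    (F : ℕ → ℝ) (hF : ∀ j < p, HKIntegral (c j) (d j) f (F j)) :
    ∑ j ∈ Finset.range p, |f (x j) * (d j - c j) - F j| ≤ 2 * ε :=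
  sum_abs_le_two_mul_of_forall_subset fun _ hS =>
    abs_sum_sub_le_of_subset hab hf hδpos
      (fun _ ⟨n, t, y, hP, hPf, hr⟩ => hr ▸ hδ n t y hP hPf) hfam hfine hF hS

/-- Saks–Henstock lemma: if `δ` is a gauge witnessing `ε`-approximation of the HK
integral of `f` on `[a,b]`, then for every `δ`-fine tagged family the total deviation
of the Riemann terms from the corresponding partial integrals is at most `2ε`. -/
theorem saks_henstock (a b : ℝ) (hab : a ≤ b) (f : ℝ → ℝ) (I : ℝ)
    (hf : HKIntegral a b f I) (ε : ℝ) (hε : 0 < ε) (δ : ℝ → ℝ)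
    (hδpos : ∀ y ∈ Set.Icc a b, 0 < δ y)
    (hδ : ∀ (n : ℕ) (t x : ℕ → ℝ), IsTaggedPartition a b n t x → IsFine δ n t x →
      |RiemannSum f n t x - I| < ε)
    (p : ℕ) (c d x : ℕ → ℝ) (hfam : IsTaggedFamily a b p c d x)
    (hfine : IsFamilyFine δ p c d x)
    (F : ℕ → ℝ) (hF : ∀ j < p, HKIntegral (c j) (d j) f (F j)) :
    ∑ j ∈ Finset.range p, |f (x j) * (d j - c j) - F j| ≤ 2 * ε :=
  saks_henstock_general a b hab f I hf ε δ hδpos hδ p c d x hfam hfine F hF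
end

section
/- Let f be HK integrable on [a,b] with indefinite integral F(x) = ∫_a^x f. Then F is differentiable with F'(x) = f(x) at Lebesgue-almost every x in [a,b]. -/
/-!
If `F' = f` fails at `x`, then for some `ε > 0` there are arbitrarily short intervals
`[u, v] ∋ x` in `[a, b]` with `|F v - F u - f x (v - u)| ≥ ε (v - u)`. Fix `η > 0` and a gauge `δ`
for the integral over `[a, b]` with tolerance `ε η / 2`. By the Vitali covering theorem almost all
such points `x` are covered by disjoint `δ`-fine intervals of this kind; by the Saks–Henstock lemma
their defects sum to at most `ε η`, so their lengths sum to at most `η`.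
-/
open Set Finset MeasureTheory
open scoped Topology

def seqAppend (n : ℕ) (s₁ s₂ : ℕ → ℝ) (j : ℕ) : ℝ :=
  if j < n then s₁ j else s₂ (j - n)

section seqAppend

variable {n₁ n₂ : ℕ} {t₁ t₂ x₁ x₂ : ℕ → ℝ}

theorem seqAppend_of_lt {j : ℕ} (h : j < n₁) : seqAppend n₁ t₁ t₂ j = t₁ j := if_pos h

theorem seqAppend_add (j : ℕ) : seqAppend n₁ t₁ t₂ (n₁ + j) = t₂ j := by
  simp [seqAppend]

theorem seqAppend_succ_of_lt (ht : t₁ n₁ = t₂ 0) {j : ℕ} (h : j < n₁) :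
    seqAppend n₁ t₁ t₂ (j + 1) = t₁ (j + 1) := by
  rcases (show j + 1 ≤ n₁ from h).lt_or_eq with h' | h'
  · exact seqAppend_of_lt h'
  · simp [← h', seqAppend, ← ht]

theorem seqAppend_zero (ht : t₁ n₁ = t₂ 0) : seqAppend n₁ t₁ t₂ 0 = t₁ 0 := by
  rcases Nat.eq_zero_or_pos n₁ with rfl | h
  · simp [seqAppend, ht]
  · exact seqAppend_of_lt h

theorem forall_lt_seqAppend {P : ℝ → ℝ → ℝ → Prop} (ht : t₁ n₁ = t₂ 0)
    (h₁ : ∀ j < n₁, P (t₁ j) (t₁ (j + 1)) (x₁ j)) (h₂ : ∀ j < n₂, P (t₂ j) (t₂ (j + 1)) (x₂ j)) :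
    ∀ j < n₁ + n₂,
      P (seqAppend n₁ t₁ t₂ j) (seqAppend n₁ t₁ t₂ (j + 1)) (seqAppend n₁ x₁ x₂ j) := by
  intro j hj
  rcases lt_or_ge j n₁ with hj₁ | hj₁
  · rw [seqAppend_of_lt hj₁, seqAppend_succ_of_lt ht hj₁, seqAppend_of_lt hj₁]
    exact h₁ j hj₁
  · obtain ⟨i, rfl⟩ := Nat.exists_eq_add_of_le hj₁
    rw [add_assoc, seqAppend_add, seqAppend_add, seqAppend_add]
    exact h₂ i (by omega)

theorem sum_range_seqAppend (g : ℝ → ℝ → ℝ → ℝ) (ht : t₁ n₁ = t₂ 0) :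
    ∑ j ∈ range (n₁ + n₂),
        g (seqAppend n₁ t₁ t₂ j) (seqAppend n₁ t₁ t₂ (j + 1)) (seqAppend n₁ x₁ x₂ j) =
      ∑ j ∈ range n₁, g (t₁ j) (t₁ (j + 1)) (x₁ j) +
        ∑ j ∈ range n₂, g (t₂ j) (t₂ (j + 1)) (x₂ j) := by
  rw [sum_range_add]
  congr 1
  · refine sum_congr rfl fun j hj => ?_
    have hj := mem_range.1 hj
    rw [seqAppend_of_lt hj, seqAppend_succ_of_lt ht hj, seqAppend_of_lt hj]
  · refine sum_congr rfl fun j _ => ?_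
    rw [add_assoc, seqAppend_add, seqAppend_add, seqAppend_add]

end seqAppend

section TaggedPartition

variable {a b c : ℝ} {δ : ℝ → ℝ}

theorem exists_isTaggedPartition_append {n₁ n₂ : ℕ} {t₁ t₂ x₁ x₂ : ℕ → ℝ}
    (hp₁ : IsTaggedPartition a c n₁ t₁ x₁) (hp₂ : IsTaggedPartition c b n₂ t₂ x₂)
    (hf₁ : IsFine δ n₁ t₁ x₁) (hf₂ : IsFine δ n₂ t₂ x₂) :
    ∃ n t x, IsTaggedPartition a b n t x ∧ IsFine δ n t x ∧
      ∀ g, RiemannSum g n t x = RiemannSum g n₁ t₁ x₁ + RiemannSum g n₂ t₂ x₂ := by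
  have ht : t₁ n₁ = t₂ 0 := hp₁.2.1.trans hp₂.1.symm
  refine ⟨n₁ + n₂, seqAppend n₁ t₁ t₂, seqAppend n₁ x₁ x₂,
    ⟨(seqAppend_zero ht).trans hp₁.1, (seqAppend_add n₂).trans hp₂.2.1,
      forall_lt_seqAppend (P := fun u v _ => u < v) (x₁ := x₁) (x₂ := x₂) ht hp₁.2.2.1 hp₂.2.2.1,
      forall_lt_seqAppend (P := fun u v τ => τ ∈ Icc u v) ht hp₁.2.2.2 hp₂.2.2.2⟩,
    forall_lt_seqAppend (P := fun u v τ => v - u < δ τ) ht hf₁ hf₂, fun g => ?_⟩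
  exact sum_range_seqAppend (fun u v τ => g τ * (v - u)) ht

theorem exists_isTaggedPartition_single {u v τ : ℝ} (huv : u < v) (hτ : τ ∈ Icc u v)
    (hδ : v - u < δ τ) :
    ∃ n t x, IsTaggedPartition u v n t x ∧ IsFine δ n t x ∧
      ∀ g, RiemannSum g n t x = g τ * (v - u) := by
  refine ⟨1, fun j => if j = 0 then u else v, fun _ => τ, ⟨rfl, rfl, ?_, ?_⟩, ?_, ?_⟩ <;>
    simp_all [IsFine, RiemannSum]

/-- Cousin's lemma. -/
theorem exists_isTaggedPartition_isFine (hab : a ≤ b) (hδ : ∀ y ∈ Icc a b, 0 < δ y) :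
    ∃ n t x, IsTaggedPartition a b n t x ∧ IsFine δ n t x := by
  set S := {c ∈ Icc a b | ∃ n t x, IsTaggedPartition a c n t x ∧ IsFine δ n t x}
  have haS : a ∈ S := ⟨left_mem_Icc.2 hab, 0, fun _ => a, fun _ => a, by
    simp [IsTaggedPartition, IsFine]⟩
  have hbdd : BddAbove S := ⟨b, fun c hc => hc.1.2⟩
  set m := sSup S
  have hm : m ∈ Icc a b := ⟨le_csSup hbdd haS, csSup_le ⟨a, haS⟩ fun c hc => hc.1.2⟩
  have extend : ∀ c ∈ S, ∀ d ≤ b, c ≤ m → m ≤ d → d - c < δ m → d ∈ S := by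
    rintro c ⟨hc, n, t, x, hp, hf⟩ d hdb hcm hmd hcd
    rcases (hcm.trans hmd).eq_or_lt with rfl | hlt
    · exact ⟨hc, n, t, x, hp, hf⟩
    obtain ⟨n', t', x', hp', hf', -⟩ := exists_isTaggedPartition_single hlt ⟨hcm, hmd⟩ hcd
    obtain ⟨n'', t'', x'', hp'', hf'', -⟩ := exists_isTaggedPartition_append hp hp' hf hf'
    exact ⟨⟨hc.1.trans hlt.le, hdb⟩, n'', t'', x'', hp'', hf''⟩
  have hδm := hδ m hm
  obtain ⟨c, hcS, hc⟩ := exists_lt_of_lt_csSup ⟨a, haS⟩ (sub_lt_self m hδm)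
  have hmS : m ∈ S := extend c hcS m hm.2 (le_csSup hbdd hcS) le_rfl (by linarith)
  have hmb : m = b := by
    by_contra hne
    have hdS := extend m hmS (min b (m + δ m / 2)) (min_le_left _ _) le_rfl
      (le_min hm.2 (by linarith)) (by linarith [min_le_right b (m + δ m / 2)])
    exact (le_csSup hbdd hdS).not_gt (lt_min (lt_of_le_of_ne hm.2 hne) (by linarith))
  exact hmb ▸ hmS.2

end TaggedPartition

namespace HKIntegral

variable {a u v α β : ℝ} {f δ : ℝ → ℝ}

theorem exists_riemannSum_near (h : HKIntegral u v f α) (huv : u ≤ v)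
    (hδ : ∀ y ∈ Icc u v, 0 < δ y) {η : ℝ} (hη : 0 < η) :
    ∃ n t x, IsTaggedPartition u v n t x ∧ IsFine δ n t x ∧ |RiemannSum f n t x - α| < η := by
  obtain ⟨δ', hδ', hδ'η⟩ := h η hη
  obtain ⟨n, t, x, hp, hf⟩ := exists_isTaggedPartition_isFine huv
    (δ := fun y => min (δ y) (δ' y)) fun y hy => lt_min (hδ y hy) (hδ' y hy)
  exact ⟨n, t, x, hp, fun j hj => (hf j hj).trans_le (min_le_left _ _),
    hδ'η n t x hp fun j hj => (hf j hj).trans_le (min_le_right _ _)⟩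

theorem sub (hu : HKIntegral a u f α) (hv : HKIntegral a v f β) (hau : a ≤ u) (huv : u ≤ v) :
    HKIntegral u v f (β - α) := by
  intro ε hε
  obtain ⟨δ, hδ, hδε⟩ := hv (ε / 2) (half_pos hε)
  refine ⟨δ, fun y hy => hδ y ⟨hau.trans hy.1, hy.2⟩, fun n t x hp hf => ?_⟩
  obtain ⟨n', t', x', hp', hf', hR'⟩ := hu.exists_riemannSum_near hau
    (fun y hy => hδ y ⟨hy.1, hy.2.trans huv⟩) (half_pos hε)
  obtain ⟨n'', t'', x'', hp'', hf'', hR''⟩ := exists_isTaggedPartition_append hp' hp hf' hf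
  have hβ := hδε n'' t'' x'' hp'' hf''
  rw [hR''] at hβ
  calc |RiemannSum f n t x - (β - α)|
      = |(RiemannSum f n' t' x' + RiemannSum f n t x - β) - (RiemannSum f n' t' x' - α)| := by
        ring_nf
    _ ≤ |RiemannSum f n' t' x' + RiemannSum f n t x - β| + |RiemannSum f n' t' x' - α| :=
        abs_sub _ _
    _ < ε := by linarith

end HKIntegral

def IsHKIndefiniteIntegral (a b : ℝ) (f F : ℝ → ℝ) : Prop :=
  ∀ u v, a ≤ u → u ≤ v → v ≤ b → HKIntegral u v f (F v - F u)

theorem IsHKIndefiniteIntegral.mono {a b a' b' : ℝ} {f F : ℝ → ℝ}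
    (h : IsHKIndefiniteIntegral a b f F) (ha : a ≤ a') (hb : b' ≤ b) :
    IsHKIndefiniteIntegral a' b' f F :=
  fun u v hu huv hv => h u v (ha.trans hu) huv (hv.trans hb)

theorem isHKIndefiniteIntegral_of_hkIntegral {a b : ℝ} {f F : ℝ → ℝ}
    (hF : ∀ x ∈ Icc a b, HKIntegral a x f (F x)) : IsHKIndefiniteIntegral a b f F :=
  fun u v hu huv hv =>
    (hF u ⟨hu, huv.trans hv⟩).sub (hF v ⟨hu.trans huv, hv⟩) hu huv

theorem right_le_left_of_disjoint_Ioo {α : Type*} [LinearOrder α] [DenselyOrdered α]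
    {a₁ a₂ b₁ b₂ : α} (h : Disjoint (Ioo a₁ a₂) (Ioo b₁ b₂)) (hab : a₁ ≤ b₁) (hb : b₁ < b₂) :
    a₂ ≤ b₁ := by
  rw [Ioo_disjoint_Ioo, max_eq_right hab] at h
  rcases min_choice a₂ b₂ with h' | h' <;> rw [h'] at h
  · exact h
  · exact absurd h (not_le.2 hb)

structure TaggedInterval where
  left : ℝ
  right : ℝ
  tag : ℝ

namespace TaggedInterval

def length (I : TaggedInterval) : ℝ := I.right - I.left

def IsFineIn (δ : ℝ → ℝ) (a b : ℝ) (I : TaggedInterval) : Prop :=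
  a ≤ I.left ∧ I.left < I.right ∧ I.right ≤ b ∧ I.tag ∈ Icc I.left I.right ∧ I.length < δ I.tag

def defect (f F : ℝ → ℝ) (I : TaggedInterval) : ℝ := F I.right - F I.left - f I.tag * I.length

variable {a b : ℝ} {δ : ℝ → ℝ} {I J : TaggedInterval}

theorem IsFineIn.tag_mem (h : I.IsFineIn δ a b) : I.tag ∈ Icc a b :=
  ⟨h.1.trans h.2.2.2.1.1, h.2.2.2.1.2.trans h.2.2.1⟩

theorem IsFineIn.length_pos (h : I.IsFineIn δ a b) : 0 < I.length := sub_pos.2 h.2.1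

end TaggedInterval

open TaggedInterval

section SaksHenstock

variable {a b ε : ℝ} {f F δ : ℝ → ℝ}

/-- Fill the gaps between the intervals of `s` with fine partitions that nearly realise the
integral there. -/
theorem exists_riemannSum_near_sub_sum_defect (hab : a ≤ b) (hF : IsHKIndefiniteIntegral a b f F)
    (hδ : ∀ y ∈ Icc a b, 0 < δ y) (s : Finset TaggedInterval) (hs : ∀ I ∈ s, I.IsFineIn δ a b)
    (hdisj : (s : Set TaggedInterval).PairwiseDisjoint fun I => Ioo I.left I.right)
    {η : ℝ} (hη : 0 < η) :
    ∃ n t x, IsTaggedPartition a b n t x ∧ IsFine δ n t x ∧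
      |RiemannSum f n t x - (F b - F a - ∑ I ∈ s, I.defect f F)| < η := by
  classical
  induction s using Finset.induction_on_min_value TaggedInterval.left generalizing a η with
  | empty =>
    simpa using (hF a b le_rfl hab le_rfl).exists_riemannSum_near hab hδ hη
  | insert I s hIs hmin ih =>
    obtain ⟨haI, hIlt, hIb, hItag, hIfine⟩ := hs I (mem_insert_self I s)
    have hIb' : I.left ≤ b := hIlt.le.trans hIb
    have hs' : ∀ J ∈ s, J.IsFineIn δ I.right b := fun J hJ =>
      have hJ' := hs J (mem_insert_of_mem hJ)
      ⟨right_le_left_of_disjoint_Ioo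
        (hdisj (by simp) (by simp [hJ]) (ne_of_mem_of_not_mem hJ hIs).symm) (hmin J hJ) hJ'.2.1,
        hJ'.2⟩
    obtain ⟨n₁, t₁, x₁, hp₁, hf₁, hR₁⟩ := (hF a I.left le_rfl haI hIb').exists_riemannSum_near
      haI (fun y hy => hδ y ⟨hy.1, hy.2.trans hIb'⟩) (half_pos hη)
    obtain ⟨n₂, t₂, x₂, hp₂, hf₂, hR₂⟩ := exists_isTaggedPartition_single hIlt hItag hIfine
    obtain ⟨n₃, t₃, x₃, hp₃, hf₃, hR₃⟩ := ih hIb (hF.mono (haI.trans hIlt.le) le_rfl)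
      (fun y hy => hδ y ⟨haI.trans (hIlt.le.trans hy.1), hy.2⟩) hs'
      (hdisj.subset (by simp)) (half_pos hη)
    obtain ⟨n₄, t₄, x₄, hp₄, hf₄, hR₄⟩ := exists_isTaggedPartition_append hp₁ hp₂ hf₁ hf₂
    obtain ⟨n, t, x, hp, hf, hR⟩ := exists_isTaggedPartition_append hp₄ hp₃ hf₄ hf₃
    refine ⟨n, t, x, hp, hf, ?_⟩
    rw [hR, hR₄, hR₂, sum_insert hIs]
    calc _ = |(RiemannSum f n₁ t₁ x₁ - (F I.left - F a)) +
          (RiemannSum f n₃ t₃ x₃ - (F b - F I.right - ∑ J ∈ s, J.defect f F))| := by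
          simp only [defect, length]; ring_nf
      _ ≤ _ := abs_add_le _ _
      _ < η := by linarith

/-- The Saks–Henstock lemma. -/
theorem abs_sum_defect_le (hab : a ≤ b) (hF : IsHKIndefiniteIntegral a b f F)
    (hδ : ∀ y ∈ Icc a b, 0 < δ y)
    (hδε : ∀ n t x, IsTaggedPartition a b n t x → IsFine δ n t x →
      |RiemannSum f n t x - (F b - F a)| < ε)
    (s : Finset TaggedInterval) (hs : ∀ I ∈ s, I.IsFineIn δ a b)
    (hdisj : (s : Set TaggedInterval).PairwiseDisjoint fun I => Ioo I.left I.right) :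
    |∑ I ∈ s, I.defect f F| ≤ ε := by
  refine le_of_forall_pos_le_add fun η hη => ?_
  obtain ⟨n, t, x, hp, hf, hR⟩ := exists_riemannSum_near_sub_sum_defect hab hF hδ s hs hdisj hη
  have hε := hδε n t x hp hf
  calc |∑ I ∈ s, I.defect f F|
      = |(RiemannSum f n t x - (F b - F a - ∑ I ∈ s, I.defect f F)) -
          (RiemannSum f n t x - (F b - F a))| := by congr 1; ring
    _ ≤ _ := abs_sub _ _
    _ ≤ ε + η := by linarith

theorem sum_abs_defect_le (hab : a ≤ b) (hF : IsHKIndefiniteIntegral a b f F)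
    (hδ : ∀ y ∈ Icc a b, 0 < δ y)
    (hδε : ∀ n t x, IsTaggedPartition a b n t x → IsFine δ n t x →
      |RiemannSum f n t x - (F b - F a)| < ε)
    (s : Finset TaggedInterval) (hs : ∀ I ∈ s, I.IsFineIn δ a b)
    (hdisj : (s : Set TaggedInterval).PairwiseDisjoint fun I => Ioo I.left I.right) :
    ∑ I ∈ s, |I.defect f F| ≤ 2 * ε := by
  have hsub (p : TaggedInterval → Prop) [DecidablePred p] :=
    abs_sum_defect_le hab hF hδ hδε (s.filter p) (fun I hI => hs I (mem_filter.1 hI).1)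
      (hdisj.subset (coe_subset.2 (filter_subset _ _)))
  have hpos := (abs_le.1 (hsub fun I => 0 ≤ I.defect f F)).2
  have hneg := (abs_le.1 (hsub fun I => ¬ 0 ≤ I.defect f F)).1
  rw [← sum_filter_add_sum_filter_not s fun I => 0 ≤ I.defect f F,
    sum_congr rfl fun I hI => abs_of_nonneg (mem_filter.1 hI).2,
    sum_congr rfl fun I hI => abs_of_neg (not_le.1 (mem_filter.1 hI).2), sum_neg_distrib]
  linarith

end SaksHenstock

theorem volume_le_of_sum_length_le {E : Set ℝ} {T : Set TaggedInterval} {C : ℝ}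
    (hT : ∀ I ∈ T, I.left < I.right ∧ I.tag ∈ Icc I.left I.right)
    (hcover : ∀ x ∈ E, ∀ r > 0, ∃ I ∈ T, I.length ≤ r ∧ I.tag = x)
    (hsum : ∀ s : Finset TaggedInterval, ↑s ⊆ T →
      (s : Set TaggedInterval).PairwiseDisjoint (fun I => Ioo I.left I.right) →
      ∑ I ∈ s, I.length ≤ C) :
    volume E ≤ ENNReal.ofReal C := by
  obtain ⟨U, hUT, hUc, hUdisj, hUnull⟩ := Vitali.exists_disjoint_covering_ae volume E T 6
    TaggedInterval.length TaggedInterval.tag (fun I => Icc I.left I.right)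
    (fun I hI => by
      have h := hT I hI
      rw [Real.closedBall_eq_Icc, length]
      exact Icc_subset_Icc (by linarith [h.2.2]) (by linarith [h.2.1]))
    (fun I hI => by
      rw [Real.volume_closedBall, Real.volume_Icc, ENNReal.coe_ofNat, ← ENNReal.ofReal_ofNat 6,
        ← ENNReal.ofReal_mul (by norm_num)]
      exact ENNReal.ofReal_le_ofReal (by simp only [length]; linarith))
    (fun I hI => by simpa using (hT I hI).1)
    (fun _ _ => isClosed_Icc) hcover
  calc volume E ≤ volume (⋃ I ∈ U, Icc I.left I.right) := measure_mono_ae (ae_le_set.2 hUnull)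
    _ ≤ ∑' I : U, volume (Icc I.1.left I.1.right) := measure_biUnion_le volume hUc _
    _ ≤ ENNReal.ofReal C := by
      refine ENNReal.tsum_eq_iSup_sum ▸ iSup_le fun s => ?_
      have hs : (↑(s.map (Function.Embedding.subtype _)) : Set TaggedInterval) ⊆ U := by simp
      calc ∑ I ∈ s, volume (Icc I.1.left I.1.right)
          = ENNReal.ofReal (∑ I ∈ s.map (Function.Embedding.subtype _), I.length) := by
            rw [sum_map,
              ENNReal.ofReal_sum_of_nonneg fun I _ => (sub_pos.2 (hT I.1 (hUT I.2)).1).le]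
            simp [Real.volume_Icc, length]
        _ ≤ ENNReal.ofReal C := ENNReal.ofReal_le_ofReal (hsum _ (hs.trans hUT)
            ((hUdisj.subset hs).mono fun I => Ioo_subset_Icc_self))

section DefectSet

variable {a b ε : ℝ} {f F : ℝ → ℝ}

/-- `IsFineIn (fun _ => r) a b` says only that `I ⊆ [a, b]` is nondegenerate of length `< r`. -/
def defectSet (a b ε : ℝ) (f F : ℝ → ℝ) : Set ℝ :=
  {x | ∀ r > 0, ∃ I : TaggedInterval, I.tag = x ∧ I.IsFineIn (fun _ => r) a b ∧
    ε * I.length ≤ |I.defect f F|}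

theorem defectSet_anti {ε' : ℝ} (h : ε' ≤ ε) : defectSet a b ε f F ⊆ defectSet a b ε' f F :=
  fun _ hx r hr => (hx r hr).imp fun _ ⟨htag, hI, hdef⟩ =>
    ⟨htag, hI, (mul_le_mul_of_nonneg_right h hI.length_pos.le).trans hdef⟩

theorem defectSet_subset_Icc : defectSet a b ε f F ⊆ Icc a b := fun x hx => by
  obtain ⟨I, rfl, hI, -⟩ := hx 1 one_pos
  exact hI.tag_mem

theorem volume_defectSet_eq_zero (hab : a ≤ b) (hF : IsHKIndefiniteIntegral a b f F)
    (hε : 0 < ε) : volume (defectSet a b ε f F) = 0 := by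
  refine le_antisymm (ENNReal.le_of_forall_pos_le_add fun η hη _ => ?_) zero_le
  obtain ⟨δ, hδ, hδε⟩ := hF a b le_rfl hab le_rfl (ε * η / 2) (by positivity)
  rw [zero_add, ← ENNReal.ofReal_coe_nnreal]
  refine volume_le_of_sum_length_le (T := {I | I.IsFineIn δ a b ∧ ε * I.length ≤ |I.defect f F|})
    (fun I hI => ⟨hI.1.2.1, hI.1.2.2.2.1⟩) (fun x hx r hr => ?_) (fun s hsT hdisj => ?_)
  · obtain ⟨I, rfl, hI, hdef⟩ := hx _ (lt_min hr (hδ x (defectSet_subset_Icc hx)))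
    exact ⟨I, ⟨⟨hI.1, hI.2.1, hI.2.2.1, hI.2.2.2.1, hI.2.2.2.2.trans_le (min_le_right _ _)⟩,
      hdef⟩, (hI.2.2.2.2.trans_le (min_le_left _ _)).le, rfl⟩
  · have hSH := sum_abs_defect_le hab hF hδ hδε s (fun I hI => (hsT hI).1) hdisj
    have hlen : ε * ∑ I ∈ s, I.length ≤ ∑ I ∈ s, |I.defect f F| := by
      rw [mul_sum]
      exact sum_le_sum fun I hI => (hsT hI).2
    exact le_of_mul_le_mul_left (by linarith) hε

theorem exists_pos_mem_defectSet {x : ℝ} (hx : x ∈ Icc a b)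
    (hd : ¬ HasDerivWithinAt F (f x) (Icc a b) x) : ∃ ε > 0, x ∈ defectSet a b ε f F := by
  rw [hasDerivWithinAt_iff_isLittleO, Asymptotics.isLittleO_iff] at hd
  push Not at hd
  obtain ⟨ε, hε, hfreq⟩ := hd
  refine ⟨ε, hε, fun r hr => ?_⟩
  have hnear : ∀ᶠ y in 𝓝[Icc a b] x, y ∈ Icc a b ∧ dist y x < r :=
    eventually_mem_nhdsWithin.and (nhdsWithin_le_nhds (Metric.ball_mem_nhds x hr))
  obtain ⟨y, hlt, hyab, hyr⟩ := (hfreq.and_eventually hnear).exists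
  simp only [Real.norm_eq_abs, smul_eq_mul] at hlt
  rw [Real.dist_eq] at hyr
  rcases lt_trichotomy y x with hyx | rfl | hxy
  · rw [abs_of_neg (sub_neg.2 hyx)] at hlt hyr
    refine ⟨⟨y, x, x⟩, rfl, ⟨hyab.1, hyx, hx.2, ⟨hyx.le, le_rfl⟩, by simp only [length]; linarith⟩,
      ?_⟩
    simp only [defect, length]
    rw [← abs_neg, show -(F x - F y - f x * (x - y)) = F y - F x - (y - x) * f x by ring]
    linarith
  · simp at hlt
  · rw [abs_of_pos (sub_pos.2 hxy)] at hlt hyr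
    refine ⟨⟨x, y, x⟩, rfl, ⟨hx.1, hxy, hyab.2, ⟨le_rfl, hxy.le⟩, hyr⟩, ?_⟩
    simp only [defect, length]
    rw [mul_comm (f x)]
    exact hlt.le

end DefectSet

/-- The indefinite HK integral `F x = ∫_a^x f` of an HK integrable function is
differentiable with derivative `f x` at almost every `x ∈ [a,b]`. -/
theorem hk_indefinite_integral_ae_deriv (a b : ℝ) (hab : a ≤ b) (f F : ℝ → ℝ)
    (hF : ∀ x ∈ Set.Icc a b, HKIntegral a x f (F x)) :
    ∀ᵐ x ∂(MeasureTheory.volume.restrict (Set.Icc a b)),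
      HasDerivWithinAt F (f x) (Set.Icc a b) x := by
  have hF' := isHKIndefiniteIntegral_of_hkIntegral hF
  rw [ae_iff, Measure.restrict_apply' measurableSet_Icc]
  refine measure_mono_null ?_ (measure_iUnion_null fun k : ℕ =>
    volume_defectSet_eq_zero (ε := 1 / (k + 1)) hab hF' (by positivity))
  rintro x ⟨hd, hx⟩
  obtain ⟨ε, hε, hxε⟩ := exists_pos_mem_defectSet hx hd
  obtain ⟨k, hk⟩ := exists_nat_one_div_lt hε
  exact mem_iUnion.2 ⟨k, defectSet_anti hk.le hxε⟩
end

section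
/- Let F : [a,b] → ℝ be continuous, pointwise Lipschitz at all but countably many points. Then F is AC_*: for every Lebesgue-null set D ⊆ [a,b] and every ε > 0, there exists a positive gauge δ on D such that whenever (([cⱼ,dⱼ],xⱼ))ⱼ is a finite collection of nonoverlapping subintervals of [a,b] with tags xⱼ ∈ D ∩ [cⱼ,dⱼ] and dⱼ - cⱼ < δ(xⱼ), one has Σⱼ |F(dⱼ) - F(cⱼ)| < ε. -/
open Set Finset MeasureTheory

lemma sum_le_of_sum_fiber_le_geometric {ι : Type*} (s : Finset ι) (κ : ι → ℕ) (f : ι → ℝ)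
    {C : ℝ} (hC : 0 ≤ C) (h : ∀ n, ∑ j ∈ s with κ j = n, f j ≤ C / 2 / 2 ^ n) :
    ∑ j ∈ s, f j ≤ C := by
  rw [← sum_fiberwise_of_maps_to fun j hj => mem_image_of_mem κ hj]
  calc ∑ n ∈ s.image κ, ∑ j ∈ s with κ j = n, f j
      ≤ ∑ n ∈ s.image κ, C / 2 / 2 ^ n := sum_le_sum fun n _ => h n
    _ ≤ ∑' n, C / 2 / 2 ^ n :=
        (summable_geometric_two' C).sum_le_tsum _ fun _ _ => by positivity
    _ = C := tsum_geometric_two' C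

lemma ofReal_sum_sub_le_volume {ι : Type*} {s : Finset ι} {c d : ι → ℝ}
    (hcd : ∀ j ∈ s, c j ≤ d j) (hdisj : (s : Set ι).PairwiseDisjoint fun j => Ioo (c j) (d j))
    {U : Set ℝ} (hU : ∀ j ∈ s, Ioo (c j) (d j) ⊆ U) :
    ENNReal.ofReal (∑ j ∈ s, (d j - c j)) ≤ volume U := by
  rw [ENNReal.ofReal_sum_of_nonneg fun j hj => sub_nonneg.2 (hcd j hj)]
  calc ∑ j ∈ s, ENNReal.ofReal (d j - c j) = volume (⋃ j ∈ s, Ioo (c j) (d j)) := by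
        rw [measure_biUnion_finset hdisj fun _ _ => measurableSet_Ioo]
        simp only [Real.volume_Ioo]
    _ ≤ volume U := measure_mono (iUnion₂_subset hU)

lemma Icc_subset_ball_of_mem {c d z r : ℝ} (hz : z ∈ Icc c d) (hr : d - c < r) :
    Icc c d ⊆ Metric.ball z r := fun y hy => by
  rw [Metric.mem_ball, Real.dist_eq, abs_lt]
  constructor <;> linarith [hy.1, hy.2, hz.1, hz.2]

lemma abs_sub_le_mul_of_le_mul_abs_sub {F : ℝ → ℝ} {z c d K : ℝ} (hz : z ∈ Icc c d)
    (hc : |F c - F z| ≤ K * |c - z|) (hd : |F d - F z| ≤ K * |d - z|) :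
    |F d - F c| ≤ K * (d - c) := by
  rw [abs_of_nonpos (sub_nonpos.2 hz.1)] at hc
  rw [abs_of_nonneg (sub_nonneg.2 hz.2)] at hd
  linarith [abs_sub_le (F d) (F z) (F c), abs_sub_comm (F z) (F c)]

namespace IsTaggedFamily

variable {a b : ℝ} {p : ℕ} {c d x : ℕ → ℝ}

lemma c_lt_d (h : IsTaggedFamily a b p c d x) {j : ℕ} (hj : j < p) : c j < d j :=
  (h.1 j hj).2.1

lemma tag_mem (h : IsTaggedFamily a b p c d x) {j : ℕ} (hj : j < p) : x j ∈ Icc (c j) (d j) :=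
  h.2.2 j hj

lemma Icc_subset (h : IsTaggedFamily a b p c d x) {j : ℕ} (hj : j < p) :
    Icc (c j) (d j) ⊆ Icc a b :=
  Icc_subset_Icc (h.1 j hj).1 (h.1 j hj).2.2

lemma d_le_c (h : IsTaggedFamily a b p c d x) {j k : ℕ} (hjk : j < k) (hk : k < p) :
    d j ≤ c k := by
  induction k, hjk using Nat.le_induction with
  | base => exact h.2.1 j hk
  | succ k hjk ih => exact (ih (by omega)).trans ((h.c_lt_d (by omega)).le.trans (h.2.1 k hk))

lemma pairwiseDisjoint_Ioo (h : IsTaggedFamily a b p c d x) :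
    ((range p : Finset ℕ) : Set ℕ).PairwiseDisjoint fun j => Ioo (c j) (d j) := by
  intro i hi j hj hij
  simp only [coe_range, Set.mem_Iio] at hi hj
  rcases hij.lt_or_gt with hij | hij
  · exact Ioo_disjoint_Ioo.2
      ((min_le_left _ _).trans ((h.d_le_c hij hj).trans (le_max_right _ _)))
  · exact Ioo_disjoint_Ioo.2
      ((min_le_right _ _).trans ((h.d_le_c hij hi).trans (le_max_left _ _)))

lemma card_filter_mem_Icc_le_two (h : IsTaggedFamily a b p c d x) (z : ℝ) :
    #{j ∈ range p | z ∈ Icc (c j) (d j)} ≤ 2 := by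
  set G := {j ∈ range p | z ∈ Icc (c j) (d j)}
  rcases G.eq_empty_or_nonempty with hG | hG
  · simp [hG]
  set i := G.min' hG
  -- an interval lying strictly between two intervals through `z` would separate them
  have hle : ∀ j ∈ G, j ≤ i + 1 := by
    intro j hj
    by_contra! hlt
    obtain ⟨hjp, hzj⟩ := mem_filter.1 hj
    obtain ⟨-, hzi⟩ := mem_filter.1 (G.min'_mem hG)
    rw [Finset.mem_range] at hjp
    have hi : i + 1 < p := by omega
    linarith [h.d_le_c (lt_add_one i) hi, h.c_lt_d hi, h.d_le_c hlt hjp, hzi.2, hzj.1]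
  calc #G ≤ #(Icc i (i + 1)) :=
        card_le_card fun j hj => Finset.mem_Icc.2 ⟨G.min'_le j hj, hle j hj⟩
    _ = 2 := by rw [Nat.card_Icc]; omega

end IsTaggedFamily

open Classical in
def GaugeBoundsVariation (a b : ℝ) (F : ℝ → ℝ) (S : Set ℝ) (ε : ℝ) : Prop :=
  ∃ δ : ℝ → ℝ, (∀ y ∈ S, 0 < δ y) ∧
    ∀ (p : ℕ) (c d x : ℕ → ℝ), IsTaggedFamily a b p c d x →
      (∀ j < p, x j ∈ S → d j - c j < δ (x j)) →
      ∑ j ∈ range p with x j ∈ S, |F (d j) - F (c j)| ≤ ε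

namespace GaugeBoundsVariation

variable {a b : ℝ} {F : ℝ → ℝ} {S T : Set ℝ} {ε ε' : ℝ}

lemma union (hS : GaugeBoundsVariation a b F S ε) (hT : GaugeBoundsVariation a b F T ε')
    (hST : Disjoint S T) : GaugeBoundsVariation a b F (S ∪ T) (ε + ε') := by
  classical
  obtain ⟨δS, hδS, hS⟩ := hS
  obtain ⟨δT, hδT, hT⟩ := hT
  refine ⟨fun z => if z ∈ S then δS z else δT z, ?_, fun p c d x hfam hfine => ?_⟩
  · rintro z (hz | hz)
    · simpa [hz] using hδS z hz
    · simpa [hST.notMem_of_mem_right hz] using hδT z hz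
  have hsumS := hS p c d x hfam fun j hj hxj => by
    simpa [hxj] using hfine j hj (Or.inl hxj)
  have hsumT := hT p c d x hfam fun j hj hxj => by
    simpa [hST.notMem_of_mem_right hxj] using hfine j hj (Or.inr hxj)
  simp only [Set.mem_union]
  rw [filter_or, sum_union (disjoint_filter.2 fun j _ hjS hjT => hST.notMem_of_mem_left hjS hjT)]
  linarith

end GaugeBoundsVariation

section

variable {a b : ℝ} {F : ℝ → ℝ} {S : Set ℝ} {ε : ℝ}

theorem gaugeBoundsVariation_of_countable (hS : S.Countable)
    (hF : ∀ z ∈ S, ContinuousWithinAt F (Icc a b) z) (hε : 0 < ε) :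
    GaugeBoundsVariation a b F S ε := by
  classical
  obtain ⟨idx, hidx⟩ := Set.countable_iff_exists_injOn.1 hS
  have hosc : ∀ z, ∃ r > 0, z ∈ S →
      ∀ y ∈ Icc a b, |y - z| < r → |F y - F z| < ε / 8 / 2 ^ idx z := by
    intro z
    by_cases hz : z ∈ S
    · obtain ⟨r, hr, hrF⟩ :=
        Metric.continuousWithinAt_iff.1 (hF z hz) (ε / 8 / 2 ^ idx z) (by positivity)
      exact ⟨r, hr, fun _ y hy hyz => by
        simpa only [Real.dist_eq] using hrF hy (by rwa [Real.dist_eq])⟩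
    · exact ⟨1, one_pos, fun h => absurd h hz⟩
  choose r hr hrF using hosc
  refine ⟨r, fun z _ => hr z, fun p c d x hfam hfine => ?_⟩
  refine sum_le_of_sum_fiber_le_geometric _ (fun j => idx (x j)) _ hε.le fun n => ?_
  set G := {j ∈ {j ∈ range p | x j ∈ S} | idx (x j) = n}
  have hG : ∀ j ∈ G, j < p ∧ x j ∈ S ∧ idx (x j) = n := fun j hj => by
    simp only [G, mem_filter, Finset.mem_range] at hj
    exact ⟨hj.1.1, hj.1.2, hj.2⟩
  have hterm : ∀ j ∈ G, |F (d j) - F (c j)| ≤ 2 * (ε / 8 / 2 ^ n) := by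
    intro j hj
    obtain ⟨hjp, hxS, rfl⟩ := hG j hj
    have hball := Icc_subset_ball_of_mem (hfam.tag_mem hjp) (hfine j hjp hxS)
    have hcd := hfam.c_lt_d hjp
    have hc := hrF _ hxS (c j) (hfam.Icc_subset hjp ⟨le_rfl, hcd.le⟩) (hball ⟨le_rfl, hcd.le⟩)
    have hd := hrF _ hxS (d j) (hfam.Icc_subset hjp ⟨hcd.le, le_rfl⟩) (hball ⟨hcd.le, le_rfl⟩)
    linarith [abs_sub_le (F (d j)) (F (x j)) (F (c j)), abs_sub_comm (F (x j)) (F (c j))]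
  have hcard : #G ≤ 2 := by
    rcases G.eq_empty_or_nonempty with hGe | ⟨i, hi⟩
    · simp [hGe]
    refine (Finset.card_le_card fun j hj => ?_).trans (hfam.card_filter_mem_Icc_le_two (x i))
    obtain ⟨hjp, hxj, hj⟩ := hG j hj
    obtain ⟨-, hxi, hi⟩ := hG i hi
    rw [hidx hxi hxj (hi.trans hj.symm)]
    exact mem_filter.2 ⟨Finset.mem_range.2 hjp, hfam.tag_mem hjp⟩
  calc ∑ j ∈ G, |F (d j) - F (c j)| ≤ #G • (2 * (ε / 8 / 2 ^ n)) :=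
        sum_le_card_nsmul _ _ _ hterm
    _ ≤ 2 • (2 * (ε / 8 / 2 ^ n)) := nsmul_le_nsmul_left (by positivity) hcard
    _ = ε / 2 / 2 ^ n := by rw [two_nsmul]; ring

theorem gaugeBoundsVariation_of_null (hS : volume S = 0)
    (hLip : ∀ z ∈ S, PointwiseLipschitzAt a b F z) (hε : 0 < ε) :
    GaugeBoundsVariation a b F S ε := by
  classical
  have hlip : ∀ z, ∃ K : ℕ, ∃ r > 0, z ∈ S →
      ∀ y ∈ Icc a b, |y - z| < r → |F y - F z| ≤ K * |y - z| := by
    intro z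
    by_cases hz : z ∈ S
    · obtain ⟨K, r, hr, hK⟩ := hLip z hz
      obtain ⟨k, hk⟩ := exists_nat_ge K
      exact ⟨k, r, hr, fun _ y hy hyz => (hK y hy hyz).trans (by gcongr)⟩
    · exact ⟨0, 1, one_pos, fun h => absurd h hz⟩
  choose K r hr hK using hlip
  have hcover : ∀ k : ℕ,
      ∃ U ⊇ S, IsOpen U ∧ volume U < ENNReal.ofReal (ε / 2 / 2 ^ k / (k + 1)) :=
    fun k => S.exists_isOpen_lt_of_lt _ (by rw [hS]; exact ENNReal.ofReal_pos.2 (by positivity))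
  choose U hSU hUo hU using hcover
  have hnbhd : ∀ z, ∃ ρ > 0, z ∈ S → Metric.ball z ρ ⊆ U (K z) := by
    intro z
    by_cases hz : z ∈ S
    · obtain ⟨ρ, hρ, hball⟩ := Metric.isOpen_iff.1 (hUo (K z)) z (hSU _ hz)
      exact ⟨ρ, hρ, fun _ => hball⟩
    · exact ⟨1, one_pos, fun h => absurd h hz⟩
  choose ρ hρ hρU using hnbhd
  refine ⟨fun z => min (r z) (ρ z), fun z _ => lt_min (hr z) (hρ z),
    fun p c d x hfam hfine => ?_⟩
  refine sum_le_of_sum_fiber_le_geometric _ (fun j => K (x j)) _ hε.le fun k => ?_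
  set G := {j ∈ {j ∈ range p | x j ∈ S} | K (x j) = k}
  have hG : ∀ j ∈ G, j < p ∧ x j ∈ S ∧ K (x j) = k := fun j hj => by
    simp only [G, mem_filter, Finset.mem_range] at hj
    exact ⟨hj.1.1, hj.1.2, hj.2⟩
  have hGp : G ⊆ range p := fun j hj => Finset.mem_range.2 (hG j hj).1
  have hball : ∀ j ∈ G, Icc (c j) (d j) ⊆ Metric.ball (x j) (min (r (x j)) (ρ (x j))) :=
    fun j hj => Icc_subset_ball_of_mem (hfam.tag_mem (hG j hj).1)
      (hfine j (hG j hj).1 (hG j hj).2.1)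
  have hterm : ∀ j ∈ G, |F (d j) - F (c j)| ≤ k * (d j - c j) := by
    intro j hj
    obtain ⟨hjp, hxS, rfl⟩ := hG j hj
    have hcd := hfam.c_lt_d hjp
    have hbound : ∀ y ∈ Icc (c j) (d j), |F y - F (x j)| ≤ K (x j) * |y - x j| := fun y hy =>
      hK _ hxS y (hfam.Icc_subset hjp hy)
        ((abs_sub_lt_iff.2 (abs_sub_lt_iff.1 (Metric.mem_ball.1 (hball j hj hy)))).trans_le
          (min_le_left _ _))
    exact abs_sub_le_mul_of_le_mul_abs_sub (hfam.tag_mem hjp)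
      (hbound _ ⟨le_rfl, hcd.le⟩) (hbound _ ⟨hcd.le, le_rfl⟩)
  have hlen : ∑ j ∈ G, (d j - c j) < ε / 2 / 2 ^ k / (k + 1) := by
    refine (ENNReal.ofReal_lt_ofReal_iff (by positivity)).1 ((ofReal_sum_sub_le_volume
      (fun j hj => (hfam.c_lt_d (hG j hj).1).le) (hfam.pairwiseDisjoint_Ioo.subset hGp)
      fun j hj => ?_).trans_lt (hU k))
    obtain ⟨-, hxS, rfl⟩ := hG j hj
    exact Ioo_subset_Icc_self.trans ((hball j hj).trans
      ((Metric.ball_subset_ball (min_le_right _ _)).trans (hρU _ hxS)))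
  calc ∑ j ∈ G, |F (d j) - F (c j)| ≤ ∑ j ∈ G, k * (d j - c j) := sum_le_sum hterm
    _ = k * ∑ j ∈ G, (d j - c j) := (mul_sum _ _ _).symm
    _ ≤ k * (ε / 2 / 2 ^ k / (k + 1)) := by gcongr
    _ ≤ (k + 1) * (ε / 2 / 2 ^ k / (k + 1)) := by gcongr; linarith
    _ = ε / 2 / 2 ^ k := by field_simp

end

theorem pointwiseLipschitz_ACstar_general (a b : ℝ) (F : ℝ → ℝ)
    (hF : ContinuousOn F (Set.Icc a b)) (E : Set ℝ) (hE : E.Countable)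
    (hLip : ∀ x ∈ Set.Icc a b \ E, PointwiseLipschitzAt a b F x) :
    ∀ D ⊆ Set.Icc a b, MeasureTheory.volume D = 0 → ∀ ε > 0,
      ∃ δ : ℝ → ℝ, (∀ y ∈ D, 0 < δ y) ∧
        ∀ (p : ℕ) (c d x : ℕ → ℝ), IsTaggedFamily a b p c d x →
          (∀ j < p, x j ∈ D) → (∀ j < p, d j - c j < δ (x j)) →
          ∑ j ∈ Finset.range p, |F (d j) - F (c j)| < ε := by
  classical
  intro D hD hDnull ε hε
  have hcount : GaugeBoundsVariation a b F (D ∩ E) (ε / 4) :=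
    gaugeBoundsVariation_of_countable (hE.mono inter_subset_right)
      (fun z hz => hF z (hD hz.1)) (by positivity)
  have hnull : GaugeBoundsVariation a b F (D \ E) (ε / 4) :=
    gaugeBoundsVariation_of_null (measure_mono_null sdiff_subset hDnull)
      (fun z hz => hLip z ⟨hD hz.1, hz.2⟩) (by positivity)
  obtain ⟨δ, hδ, hsum⟩ := hcount.union hnull disjoint_sdiff_inter.symm
  rw [inter_union_sdiff] at hδ hsum
  refine ⟨δ, hδ, fun p c d x hfam htag hfine => ?_⟩
  have := hsum p c d x hfam fun j hj _ => hfine j hj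
  rw [filter_true_of_mem fun j hj => htag j (Finset.mem_range.1 hj)] at this
  linarith

/-- A continuous function on `[a,b]` which is pointwise Lipschitz at all but countably
many points is `AC_*`: on every Lebesgue-null set `D` and `ε > 0` there is a positive
gauge `δ` on `D` such that every `δ`-fine finite nonoverlapping family of subintervals
tagged in `D` has total `F`-variation `< ε`. -/
theorem pointwiseLipschitz_ACstar (a b : ℝ) (hab : a ≤ b) (F : ℝ → ℝ)
    (hF : ContinuousOn F (Set.Icc a b)) (E : Set ℝ) (hE : E.Countable)
    (hLip : ∀ x ∈ Set.Icc a b \ E, PointwiseLipschitzAt a b F x) :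
    ∀ D ⊆ Set.Icc a b, MeasureTheory.volume D = 0 → ∀ ε > 0,
      ∃ δ : ℝ → ℝ, (∀ y ∈ D, 0 < δ y) ∧
        ∀ (p : ℕ) (c d x : ℕ → ℝ), IsTaggedFamily a b p c d x →
          (∀ j < p, x j ∈ D) → (∀ j < p, d j - c j < δ (x j)) →
          ∑ j ∈ Finset.range p, |F (d j) - F (c j)| < ε :=
  pointwiseLipschitz_ACstar_general a b F hF E hE hLip
end

section
/- Let F : [a,b] → ℝ be AC_* and differentiable at Lebesgue-almost every point. Then F' (extended by 0 on the null set of non-differentiability) is HK integrable on [a,b] and ∫_a^b F' = F(b) - F(a). -/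
/-- `F` is `AC_*` on `[a,b]`. -/
def ACStar (a b : ℝ) (F : ℝ → ℝ) : Prop :=
  ∀ D ⊆ Set.Icc a b, MeasureTheory.volume D = 0 → ∀ ε > 0,
    ∃ δ : ℝ → ℝ, (∀ y ∈ D, 0 < δ y) ∧
      ∀ (p : ℕ) (c d x : ℕ → ℝ), IsTaggedFamily a b p c d x →
        (∀ j < p, x j ∈ D) → (∀ j < p, d j - c j < δ (x j)) →
        ∑ j ∈ Finset.range p, |F (d j) - F (c j)| < ε

/-- If `F` is `AC_*` on `[a,b]` and differentiable a.e. there, then its derivative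
(extended by `0` on the exceptional null set) is HK integrable with integral
`F b - F a`. -/
theorem acstar_ftc (a b : ℝ) (hab : a ≤ b) (F g : ℝ → ℝ)
    (hAC : ACStar a b F) (N : Set ℝ) (hN : MeasureTheory.volume N = 0)
    (hdiff : ∀ x ∈ Set.Icc a b \ N, HasDerivWithinAt F (g x) (Set.Icc a b) x)
    (hg0 : ∀ x ∈ N, g x = 0) :
    HKIntegral a b g (F b - F a) := by
  classical
  intro ε hε
  set D : Set ℝ := N ∩ Set.Icc a b with hDdef
  have hDnull : MeasureTheory.volume D = 0 :=
    MeasureTheory.measure_mono_null Set.inter_subset_left hN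
  obtain ⟨δ1, hδ1pos, hδ1⟩ := hAC D Set.inter_subset_right hDnull (ε/2) (by positivity)
  set ε' : ℝ := ε / (2 * (b - a + 1)) with hε'def
  have hba : (0:ℝ) < b - a + 1 := by linarith
  have hε' : 0 < ε' := by positivity
  have key : ∀ y : ℝ, ∃ d : ℝ, 0 < d ∧ (y ∈ Set.Icc a b \ N →
      ∀ z ∈ Set.Icc a b, |z - y| < d → |F z - F y - g y * (z - y)| ≤ ε' * |z - y|) := by
    intro y
    by_cases hy : y ∈ Set.Icc a b \ N
    · have h := hdiff y hy
      rw [hasDerivWithinAt_iff_isLittleO] at h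
      have h2 := h.def hε'
      rw [eventually_nhdsWithin_iff, Metric.eventually_nhds_iff] at h2
      obtain ⟨d, hd, hball⟩ := h2
      refine ⟨d, hd, fun _ z hz hzd => ?_⟩
      have := hball (y := z) (by simpa [Real.dist_eq] using hzd) hz
      simpa [Real.norm_eq_abs, smul_eq_mul, mul_comm] using this
    · exact ⟨1, one_pos, fun hy' => absurd hy' hy⟩
  choose δg hδgpos hδg using key
  set δ0 : ℝ → ℝ := fun y => if y ∈ D then δ1 y else δg y with hδ0def
  have hδ0D : ∀ y, y ∈ D → δ0 y = δ1 y := by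
    intro y h; simp only [hδ0def]; exact if_pos h
  have hδ0g : ∀ y, y ∉ D → δ0 y = δg y := by
    intro y h; simp only [hδ0def]; exact if_neg h
  refine ⟨δ0, ?_, ?_⟩
  · intro y _
    by_cases h : y ∈ D
    · rw [hδ0D y h]; exact hδ1pos y h
    · rw [hδ0g y h]; exact hδgpos y
  intro n t x hpart hfine
  obtain ⟨ht0, htn, hts, hx⟩ := hpart
  have tmono : ∀ i j : ℕ, i ≤ j → j ≤ n → t i ≤ t j := by
    intro i j hij hjn
    induction j with
    | zero => obtain rfl : i = 0 := Nat.le_zero.mp hij; exact le_refl _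
    | succ k ih =>
      rcases Nat.lt_or_ge i (k+1) with h | h
      · exact le_trans (ih (Nat.lt_succ_iff.mp h) (le_trans (Nat.le_succ k) hjn))
          (le_of_lt (hts k (by omega)))
      · obtain rfl : i = k + 1 := le_antisymm hij h
        exact le_refl _
  have hta : ∀ j, j ≤ n → a ≤ t j := fun j hj => ht0 ▸ tmono 0 j (Nat.zero_le _) hj
  have htb : ∀ j, j ≤ n → t j ≤ b := fun j hj => htn ▸ tmono j n hj le_rfl
  have hxI : ∀ j, j < n → x j ∈ Set.Icc a b := by
    intro j hj
    obtain ⟨h1, h2⟩ := hx j hj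
    exact ⟨le_trans (hta j hj.le) h1, le_trans h2 (htb (j+1) hj)⟩
  have htel : F b - F a = ∑ j ∈ Finset.range n, (F (t (j+1)) - F (t j)) := by
    rw [Finset.sum_range_sub (fun j => F (t j)), ht0, htn]
  set B : Finset ℕ := (Finset.range n).filter (fun j => x j ∈ N) with hBdef
  have hBmem : ∀ j ∈ B, j < n ∧ x j ∈ N := by
    intro j hj
    simpa [hBdef, Finset.mem_filter, Finset.mem_range] using hj
  set p : ℕ := B.card with hpdef
  set e : Fin p ↪o ℕ := B.orderEmbOfFin rfl with hedef
  have hem : ∀ i : Fin p, e i < n ∧ x (e i) ∈ N := fun i =>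
    hBmem _ (B.orderEmbOfFin_mem rfl i)
  set c' : ℕ → ℝ := fun j => if h : j < p then t (e ⟨j, h⟩) else 0 with hc'def
  set d' : ℕ → ℝ := fun j => if h : j < p then t (e ⟨j, h⟩ + 1) else 1 with hd'def
  set x' : ℕ → ℝ := fun j => if h : j < p then x (e ⟨j, h⟩) else 0 with hx'def
  have htf : IsTaggedFamily a b p c' d' x' := by
    refine ⟨?_, ?_, ?_⟩
    · intro j hj
      obtain ⟨hen, _⟩ := hem ⟨j, hj⟩
      simp only [hc'def, hd'def, dif_pos hj]
      exact ⟨hta _ hen.le, hts _ hen, htb _ hen⟩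
    · intro j hj
      have hj1 : j < p := Nat.lt_of_succ_lt hj
      simp only [hc'def, hd'def, dif_pos hj, dif_pos hj1]
      have hlt : e ⟨j, hj1⟩ < e ⟨j+1, hj⟩ := e.strictMono (by simp [Fin.lt_def])
      exact tmono _ _ hlt (hem ⟨j+1, hj⟩).1.le
    · intro j hj
      obtain ⟨hen, _⟩ := hem ⟨j, hj⟩
      simp only [hc'def, hd'def, hx'def, dif_pos hj]
      exact hx _ hen
  have hxD : ∀ j < p, x' j ∈ D := by
    intro j hj
    obtain ⟨hen, hxN⟩ := hem ⟨j, hj⟩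
    simp only [hx'def, dif_pos hj]
    exact ⟨hxN, hxI _ hen⟩
  have hsmall : ∀ j < p, d' j - c' j < δ1 (x' j) := by
    intro j hj
    obtain ⟨hen, hxN⟩ := hem ⟨j, hj⟩
    simp only [hc'def, hd'def, hx'def, dif_pos hj]
    have h1 := hfine _ hen
    rwa [hδ0D _ ⟨hxN, hxI _ hen⟩] at h1
  have hbad : ∑ j ∈ B, |F (t (j+1)) - F (t j)| < ε / 2 := by
    have h1 := hδ1 p c' d' x' htf hxD hsmall
    have h2 : ∑ j ∈ Finset.range p, |F (d' j) - F (c' j)|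
        = ∑ j ∈ B, |F (t (j+1)) - F (t j)| := by
      rw [Finset.sum_range fun j => |F (d' j) - F (c' j)|,
        ← Finset.sum_coe_sort B fun m => |F (t (m+1)) - F (t m)|]
      refine Fintype.sum_equiv (B.orderIsoOfFin rfl) _ _ fun i => ?_
      simp only [hc'def, hd'def, dif_pos i.isLt, Fin.eta, Finset.coe_orderIsoOfFin_apply,
        hedef]
      rfl
    rwa [h2] at h1
  have hgood : ∀ j ∈ (Finset.range n).filter (fun j => ¬ (x j ∈ N)),
      |g (x j) * (t (j+1) - t j) - (F (t (j+1)) - F (t j))| ≤ ε' * (t (j+1) - t j) := by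
    intro j hj
    obtain ⟨hjn, hxN⟩ : j < n ∧ x j ∉ N := by
      simpa [Finset.mem_filter, Finset.mem_range] using hj
    have hxIcc := hxI j hjn
    have hxnD : x j ∉ D := fun h => hxN h.1
    have hfj := hfine j hjn
    rw [hδ0g _ hxnD] at hfj
    obtain ⟨hcx, hxd⟩ := hx j hjn
    have hd1 : |t (j+1) - x j| < δg (x j) := by
      rw [abs_of_nonneg (by linarith)]; linarith
    have hd2 : |t j - x j| < δg (x j) := by
      rw [abs_of_nonpos (by linarith)]; linarith
    have hIcc1 : t (j+1) ∈ Set.Icc a b := ⟨hta _ hjn, htb _ hjn⟩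
    have hIcc0 : t j ∈ Set.Icc a b := ⟨hta _ hjn.le, htb _ hjn.le⟩
    have e1 := hδg (x j) ⟨hxIcc, hxN⟩ (t (j+1)) hIcc1 hd1
    have e2 := hδg (x j) ⟨hxIcc, hxN⟩ (t j) hIcc0 hd2
    rw [abs_of_nonneg (by linarith : (0:ℝ) ≤ t (j+1) - x j)] at e1
    rw [abs_of_nonpos (by linarith : t j - x j ≤ (0:ℝ)), neg_sub] at e2
    have hiden : g (x j) * (t (j+1) - t j) - (F (t (j+1)) - F (t j)) =
        (F (t j) - F (x j) - g (x j) * (t j - x j)) -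
          (F (t (j+1)) - F (x j) - g (x j) * (t (j+1) - x j)) := by ring
    calc |g (x j) * (t (j+1) - t j) - (F (t (j+1)) - F (t j))|
        ≤ |F (t j) - F (x j) - g (x j) * (t j - x j)| +
            |F (t (j+1)) - F (x j) - g (x j) * (t (j+1) - x j)| := by
          rw [hiden]; exact abs_sub _ _
      _ ≤ ε' * (x j - t j) + ε' * (t (j+1) - x j) := add_le_add e2 e1
      _ = ε' * (t (j+1) - t j) := by ring
  have hgoodsum : ∑ j ∈ (Finset.range n).filter (fun j => ¬ (x j ∈ N)),
      |g (x j) * (t (j+1) - t j) - (F (t (j+1)) - F (t j))| ≤ ε' * (b - a) := by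
    calc ∑ j ∈ (Finset.range n).filter (fun j => ¬ (x j ∈ N)),
          |g (x j) * (t (j+1) - t j) - (F (t (j+1)) - F (t j))|
        ≤ ∑ j ∈ (Finset.range n).filter (fun j => ¬ (x j ∈ N)), ε' * (t (j+1) - t j) :=
          Finset.sum_le_sum hgood
      _ ≤ ∑ j ∈ Finset.range n, ε' * (t (j+1) - t j) := by
          refine Finset.sum_le_sum_of_subset_of_nonneg (Finset.filter_subset _ _)
            (fun j hj _ => ?_)
          have hjn : j < n := Finset.mem_range.mp hj
          have := (hts j hjn).le
          exact mul_nonneg hε'.le (by linarith)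
      _ = ε' * (b - a) := by
          rw [← Finset.mul_sum, Finset.sum_range_sub t, ht0, htn]
  have hε'ba : ε' * (b - a) ≤ ε / 2 := by
    have h1 : ε' * (b - a + 1) = ε / 2 := by
      rw [hε'def]; field_simp
    nlinarith [hε'.le]
  have hRS : |RiemannSum g n t x - (F b - F a)| ≤
      ∑ j ∈ Finset.range n, |g (x j) * (t (j+1) - t j) - (F (t (j+1)) - F (t j))| := by
    rw [RiemannSum, htel, ← Finset.sum_sub_distrib]
    exact Finset.abs_sum_le_sum_abs _ _
  have hsplit := Finset.sum_filter_add_sum_filter_not (Finset.range n)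
    (fun j => x j ∈ N)
    (fun j => |g (x j) * (t (j+1) - t j) - (F (t (j+1)) - F (t j))|)
  rw [← hBdef] at hsplit
  have hbadsum : ∑ j ∈ B, |g (x j) * (t (j+1) - t j) - (F (t (j+1)) - F (t j))|
      = ∑ j ∈ B, |F (t (j+1)) - F (t j)| := by
    refine Finset.sum_congr rfl fun j hj => ?_
    rw [hg0 _ (hBmem j hj).2, zero_mul, zero_sub, abs_neg]
  rw [hbadsum] at hsplit
  calc |RiemannSum g n t x - (F b - F a)|
      ≤ ∑ j ∈ Finset.range n, |g (x j) * (t (j+1) - t j) - (F (t (j+1)) - F (t j))| := hRS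
    _ = ∑ j ∈ B, |F (t (j+1)) - F (t j)| +
        ∑ j ∈ (Finset.range n).filter (fun j => ¬ (x j ∈ N)),
          |g (x j) * (t (j+1) - t j) - (F (t (j+1)) - F (t j))| := hsplit.symm
    _ < ε := by linarith
end
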